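/- arXiv:1211.0056 — 8 statements merged into one kernel-verified Lean document; each statement's English description precedes it below -/
import Mathlib

section
/- Let x ∈ X be given, define x⁺ = Π_X(x − ∇φ(x)/L), and let ε ≥ 0. If ‖g(x)‖ ≤ ε, then ∇φ(x⁺) ∈ −N_X(x⁺) + U(2ε), where N_X(x⁺) = {v ∈ ℝⁿ : ⟨v, y − x⁺⟩ ≤ 0 for all y ∈ X} is the normal cone of X at x⁺ and U(2ε) is the closed Euclidean ball of radius 2ε centered at the origin. -/
open scoped RealInnerProductSpace Pointwise

lemma var_ineq_aux {n : ℕ} {X : Set (EuclideanSpace ℝ (Fin n))} (hXconv : Convex ℝ X)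
    {z p : EuclideanSpace ℝ (Fin n)} (hp : p ∈ X)
    (hmin : ∀ y ∈ X, ‖p - z‖ ≤ ‖y - z‖) :
    ∀ y ∈ X, ⟪z - p, y - p⟫ ≤ 0 := by
  haveI : Nonempty X := ⟨⟨p, hp⟩⟩
  have hnorm : ‖z - p‖ = ⨅ w : X, ‖z - w‖ := by
    refine le_antisymm ?_ ?_
    · refine le_ciInf fun w => ?_
      have := hmin w w.2
      rwa [norm_sub_rev z p, norm_sub_rev z w]
    · have : (⨅ w : X, ‖z - w‖) ≤ ‖z - p‖ :=
        ciInf_le ⟨0, fun _ ⟨_, h⟩ => h ▸ norm_nonneg _⟩ (⟨p, hp⟩ : X)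
      exact this
  exact (norm_eq_iInf_iff_real_inner_le_zero hXconv hp).mp hnorm

/-- For `x ∈ X`, `x⁺ = Π_X(x − ∇φ(x)/L)` and `ε ≥ 0`, if `‖g(x)‖ ≤ ε` then
`∇φ(x⁺) ∈ −N_X(x⁺) + U(2ε)`, where `g(x) = L (x − Π_X(x − ∇φ(x)/L))`. -/
theorem stmt_1 {n : ℕ} (X : Set (EuclideanSpace ℝ (Fin n)))
    (hXne : X.Nonempty) (hXclosed : IsClosed X) (hXconv : Convex ℝ X)
    (φ : EuclideanSpace ℝ (Fin n) → ℝ)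
    (φ' : EuclideanSpace ℝ (Fin n) → EuclideanSpace ℝ (Fin n))
    (hφconv : ConvexOn ℝ X φ)
    (hφdiff : ∀ x ∈ X, HasGradientAt φ (φ' x) x)
    (Lφ : ℝ) (hLφ : 0 < Lφ)
    (hφlip : ∀ x ∈ X, ∀ y ∈ X, ‖φ' x - φ' y‖ ≤ Lφ * ‖x - y‖)
    (L : ℝ) (hL : Lφ ≤ L)
    (proj : EuclideanSpace ℝ (Fin n) → EuclideanSpace ℝ (Fin n))
    (hproj : ∀ z, proj z ∈ X ∧ ∀ y ∈ X, ‖proj z - z‖ ≤ ‖y - z‖)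
    (x : EuclideanSpace ℝ (Fin n)) (hx : x ∈ X)
    (xplus : EuclideanSpace ℝ (Fin n))
    (hxplus : xplus = proj (x - (1 / L) • φ' x))
    (ε : ℝ) (hε : 0 ≤ ε)
    (hg : ‖L • (x - proj (x - (1 / L) • φ' x))‖ ≤ ε) :
    φ' xplus ∈ -{v : EuclideanSpace ℝ (Fin n) | ∀ y ∈ X, ⟪v, y - xplus⟫ ≤ 0} +
      Metric.closedBall (0 : EuclideanSpace ℝ (Fin n)) (2 * ε) := by
  have hL0 : (0:ℝ) < L := lt_of_lt_of_le hLφ hL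
  set z := x - (1 / L) • φ' x with hz
  have hpX : xplus ∈ X := hxplus ▸ (hproj z).1
  have hvar : ∀ y ∈ X, ⟪z - xplus, y - xplus⟫ ≤ 0 := by
    refine var_ineq_aux hXconv hpX fun y hy => ?_
    rw [hxplus]; exact (hproj z).2 y hy
  -- the normal cone element
  set v : EuclideanSpace ℝ (Fin n) := L • (z - xplus) with hv
  have hvN : v ∈ {v : EuclideanSpace ℝ (Fin n) | ∀ y ∈ X, ⟪v, y - xplus⟫ ≤ 0} := by
    intro y hy
    rw [hv, real_inner_smul_left]
    exact mul_nonpos_of_nonneg_of_nonpos hL0.le (hvar y hy)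
  -- bound the residual
  have hgx : ‖L • (x - xplus)‖ ≤ ε := by rw [hxplus]; exact hg
  have hvform : v = L • (x - xplus) - φ' x := by
    rw [hv, hz]
    rw [smul_sub, smul_sub, smul_smul]
    rw [mul_one_div, div_self hL0.ne']
    module
  have hlipb : ‖φ' xplus - φ' x‖ ≤ ε := by
    calc ‖φ' xplus - φ' x‖ ≤ Lφ * ‖xplus - x‖ := hφlip xplus hpX x hx
      _ ≤ L * ‖xplus - x‖ := by
          exact mul_le_mul_of_nonneg_right hL (norm_nonneg _)
      _ = ‖L • (x - xplus)‖ := by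
          rw [norm_smul, Real.norm_of_nonneg hL0.le, norm_sub_rev]
      _ ≤ ε := hgx
  have hres : ‖φ' xplus + v‖ ≤ 2 * ε := by
    have : φ' xplus + v = (φ' xplus - φ' x) + L • (x - xplus) := by
      rw [hvform]; abel
    rw [this]
    calc ‖(φ' xplus - φ' x) + L • (x - xplus)‖
        ≤ ‖φ' xplus - φ' x‖ + ‖L • (x - xplus)‖ := norm_add_le _ _
      _ ≤ ε + ε := add_le_add hlipb hgx
      _ = 2 * ε := by ring
  refine Set.mem_add.mpr ⟨-v, ?_, φ' xplus + v, ?_, by abel⟩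
  · rw [Set.mem_neg, neg_neg]; exact hvN
  · simpa [Metric.mem_closedBall, dist_eq_norm] using hres
end

section
/- Let x ∈ X be given and define x⁺ = Π_X(x − ∇φ(x)/L). Then φ(x⁺) − φ(x) ≤ −‖g(x)‖²/(2L). -/
open scoped RealInnerProductSpace
open Set

-- descent lemma
lemma descent {n : ℕ} {X : Set (EuclideanSpace ℝ (Fin n))} (hXconv : Convex ℝ X)
    {φ : EuclideanSpace ℝ (Fin n) → ℝ}
    {φ' : EuclideanSpace ℝ (Fin n) → EuclideanSpace ℝ (Fin n)}
    (hφdiff : ∀ x ∈ X, HasGradientAt φ (φ' x) x)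
    {L : ℝ} (hL0 : 0 ≤ L)
    (hφlip : ∀ x ∈ X, ∀ y ∈ X, ‖φ' x - φ' y‖ ≤ L * ‖x - y‖)
    {x y : EuclideanSpace ℝ (Fin n)} (hx : x ∈ X) (hy : y ∈ X) :
    φ y ≤ φ x + ⟪φ' x, y - x⟫ + L / 2 * ‖y - x‖ ^ 2 := by
  set d := y - x with hd
  set c : ℝ → EuclideanSpace ℝ (Fin n) := fun t => x + t • d with hc
  have hcX : ∀ t ∈ Icc (0:ℝ) 1, c t ∈ X := by
    intro t ht
    have := hXconv hx hy (a := 1 - t) (b := t) (by linarith [ht.2]) ht.1 (by ring)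
    convert this using 1
    simp only [hc, hd]
    module
  set A : ℝ := ⟪φ' x, d⟫ with hA
  set B : ℝ := ‖d‖ ^ 2 with hB
  set q : ℝ → ℝ := fun t => φ x + t * A + (L / 2 * B) * t ^ 2 - φ (c t) with hq
  have hcd : ∀ t : ℝ, HasDerivAt c d t := by
    intro t
    simpa [hc] using ((hasDerivAt_id t).smul_const d).const_add x
  have hqd : ∀ t ∈ Icc (0:ℝ) 1,
      HasDerivAt q (A + (L / 2 * B) * (2 * t) - ⟪φ' (c t), d⟫) t := by
    intro t ht
    have h1 : HasDerivAt (fun t : ℝ => φ (c t)) (⟪φ' (c t), d⟫) t := by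
      have := ((hφdiff _ (hcX t ht)).hasFDerivAt).comp_hasDerivAt t (hcd t)
      simp [InnerProductSpace.toDual_apply_apply] at this
      exact this
    have h2 : HasDerivAt (fun t : ℝ => φ x + t * A + (L / 2 * B) * t ^ 2)
        (A + (L / 2 * B) * (2 * t)) t := by
      have ha : HasDerivAt (fun t : ℝ => t * A) A t := by
        simpa using (hasDerivAt_id t).mul_const A
      have hb : HasDerivAt (fun t : ℝ => (L / 2 * B) * t ^ 2) ((L / 2 * B) * (2 * t)) t := by
        simpa [mul_comm] using (hasDerivAt_pow 2 t).const_mul (L / 2 * B)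
      exact (ha.const_add (φ x)).add hb
    exact h2.sub h1
  have hmono : MonotoneOn q (Icc (0:ℝ) 1) := by
    apply monotoneOn_of_deriv_nonneg (convex_Icc 0 1)
    · exact fun t ht => ((hqd t ht).continuousAt).continuousWithinAt
    · intro t ht
      rw [interior_Icc] at ht
      exact ((hqd t (Ioo_subset_Icc_self ht)).differentiableAt).differentiableWithinAt
    · intro t ht
      rw [interior_Icc] at ht
      rw [(hqd t (Ioo_subset_Icc_self ht)).deriv]
      have hsub : ⟪φ' (c t), d⟫ - A = ⟪φ' (c t) - φ' x, d⟫ := by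
        rw [inner_sub_left]
      have hCS : ⟪φ' (c t) - φ' x, d⟫ ≤ ‖φ' (c t) - φ' x‖ * ‖d‖ := real_inner_le_norm _ _
      have hlip : ‖φ' (c t) - φ' x‖ ≤ L * (t * ‖d‖) := by
        have := hφlip _ (hcX t (Ioo_subset_Icc_self ht)) x hx
        have hnorm : ‖c t - x‖ = t * ‖d‖ := by
          simp [hc, norm_smul, abs_of_pos ht.1]
        rw [hnorm] at this
        exact this
      have hfin : ⟪φ' (c t), d⟫ - A ≤ L * t * B := by
        rw [hsub]
        calc ⟪φ' (c t) - φ' x, d⟫ ≤ ‖φ' (c t) - φ' x‖ * ‖d‖ := hCS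
          _ ≤ L * (t * ‖d‖) * ‖d‖ :=
              mul_le_mul_of_nonneg_right hlip (norm_nonneg d)
          _ = L * t * B := by rw [hB]; ring
      have hring : (L / 2 * B) * (2 * t) = L * t * B := by ring
      linarith
  have h01 := hmono (left_mem_Icc.2 zero_le_one) (right_mem_Icc.2 zero_le_one) zero_le_one
  have hc0 : c 0 = x := by simp [hc]
  have hc1 : c 1 = y := by simp [hc, hd]
  simp only [hq, hc0, hc1] at h01
  nlinarith [h01]

lemma var_ineq {n : ℕ} {X : Set (EuclideanSpace ℝ (Fin n))} (hXconv : Convex ℝ X)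
    {proj : EuclideanSpace ℝ (Fin n) → EuclideanSpace ℝ (Fin n)}
    (hproj : ∀ z, proj z ∈ X ∧ ∀ y ∈ X, ‖proj z - z‖ ≤ ‖y - z‖)
    (z : EuclideanSpace ℝ (Fin n)) {y : EuclideanSpace ℝ (Fin n)} (hy : y ∈ X) :
    ⟪z - proj z, y - proj z⟫ ≤ 0 := by
  have hmem := (hproj z).1
  haveI : Nonempty X := ⟨⟨proj z, hmem⟩⟩
  have hbdd : BddBelow (Set.range fun w : X => ‖z - (w : EuclideanSpace ℝ (Fin n))‖) := by
    refine ⟨0, ?_⟩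
    rintro r ⟨w, rfl⟩
    exact norm_nonneg _
  have hinf : ‖z - proj z‖ = ⨅ w : X, ‖z - w‖ := by
    apply le_antisymm
    · refine le_ciInf fun w => ?_
      rw [norm_sub_rev, norm_sub_rev z]
      exact (hproj z).2 w w.2
    · exact ciInf_le hbdd ⟨proj z, hmem⟩
  exact (norm_eq_iInf_iff_real_inner_le_zero hXconv hmem).1 hinf y hy

/-- For `x ∈ X` and `x⁺ = Π_X(x − ∇φ(x)/L)`, one has
`φ(x⁺) − φ(x) ≤ −‖g(x)‖²/(2L)`, where `g(x) = L (x − Π_X(x − ∇φ(x)/L))`. -/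
theorem stmt_2 {n : ℕ} (X : Set (EuclideanSpace ℝ (Fin n)))
    (hXne : X.Nonempty) (hXclosed : IsClosed X) (hXconv : Convex ℝ X)
    (φ : EuclideanSpace ℝ (Fin n) → ℝ)
    (φ' : EuclideanSpace ℝ (Fin n) → EuclideanSpace ℝ (Fin n))
    (hφconv : ConvexOn ℝ X φ)
    (hφdiff : ∀ x ∈ X, HasGradientAt φ (φ' x) x)
    (Lφ : ℝ) (hLφ : 0 < Lφ)
    (hφlip : ∀ x ∈ X, ∀ y ∈ X, ‖φ' x - φ' y‖ ≤ Lφ * ‖x - y‖)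
    (L : ℝ) (hL : Lφ ≤ L)
    (proj : EuclideanSpace ℝ (Fin n) → EuclideanSpace ℝ (Fin n))
    (hproj : ∀ z, proj z ∈ X ∧ ∀ y ∈ X, ‖proj z - z‖ ≤ ‖y - z‖)
    (x : EuclideanSpace ℝ (Fin n)) (hx : x ∈ X)
    (xplus : EuclideanSpace ℝ (Fin n))
    (hxplus : xplus = proj (x - (1 / L) • φ' x)) :
    φ xplus - φ x ≤ -‖L • (x - proj (x - (1 / L) • φ' x))‖ ^ 2 / (2 * L) := by
  have hL0 : 0 < L := lt_of_lt_of_le hLφ hL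
  set z := x - (1 / L) • φ' x with hz
  set p := proj z with hp
  have hpX : p ∈ X := (hproj z).1
  have hlip' : ∀ a ∈ X, ∀ b ∈ X, ‖φ' a - φ' b‖ ≤ L * ‖a - b‖ := by
    intro a ha b hb
    exact (hφlip a ha b hb).trans (mul_le_mul_of_nonneg_right hL (norm_nonneg _))
  have hdesc := descent hXconv hφdiff hL0.le hlip' hx hpX
  have hvi := var_ineq hXconv hproj z hx
  rw [← hp] at hvi
  -- z - p = (x - p) - (1/L) • φ' x
  have hzp : z - p = (x - p) - (1 / L) • φ' x := by rw [hz]; abel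
  rw [hzp] at hvi
  rw [inner_sub_left, real_inner_smul_left, real_inner_self_eq_norm_sq] at hvi
  have hinner : ⟪φ' x, p - x⟫ ≤ -(L * ‖x - p‖ ^ 2) := by
    have h1 : ⟪φ' x, x - p⟫ = ⟪x - p, φ' x⟫ := real_inner_comm _ _
    have h2 : ⟪φ' x, p - x⟫ = -⟪φ' x, x - p⟫ := by
      rw [← inner_neg_right]; congr 1; abel
    rw [h2, h1]
    rw [h1] at hvi
    have h3 : ‖x - p‖ ^ 2 ≤ (1 / L) * ⟪x - p, φ' x⟫ := by linarith
    have h5 := mul_le_mul_of_nonneg_left h3 hL0.le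
    have h6 : L * (1 / L * ⟪x - p, φ' x⟫) = ⟪x - p, φ' x⟫ := by field_simp
    linarith
  have hnorm : ‖p - x‖ = ‖x - p‖ := norm_sub_rev _ _
  rw [hxplus]
  have hrhs : -‖L • (x - p)‖ ^ 2 / (2 * L) = -(L / 2) * ‖x - p‖ ^ 2 := by
    rw [norm_smul, Real.norm_eq_abs, abs_of_pos hL0]
    field_simp
  rw [hrhs]
  rw [hnorm] at hdesc
  nlinarith [hdesc, hinner]
end

section
/- Let x ∈ X be given and let x* be a minimizer of φ over X. Then φ(x) − φ(x*) ≥ ‖g(x)‖²/(2L). -/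
open scoped RealInnerProductSpace

/-- Descent lemma: if the gradient is `K`-Lipschitz on the segment from `x` to `y`,
then `φ y ≤ φ x + ⟪∇φ x, y - x⟫ + K/2 ‖y - x‖²`. -/
theorem descent_lemma {n : ℕ} (φ : EuclideanSpace ℝ (Fin n) → ℝ)
    (φ' : EuclideanSpace ℝ (Fin n) → EuclideanSpace ℝ (Fin n))
    (x y : EuclideanSpace ℝ (Fin n)) (K : ℝ) (hK : 0 ≤ K)
    (hdiff : ∀ t ∈ Set.Icc (0:ℝ) 1, HasGradientAt φ (φ' (x + t • (y - x))) (x + t • (y - x)))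
    (hlip : ∀ s ∈ Set.Icc (0:ℝ) 1, ∀ t ∈ Set.Icc (0:ℝ) 1,
      ‖φ' (x + s • (y - x)) - φ' (x + t • (y - x))‖ ≤ K * ‖(x + s • (y - x)) - (x + t • (y - x))‖) :
    φ y ≤ φ x + ⟪φ' x, y - x⟫ + K / 2 * ‖y - x‖ ^ 2 := by
  set d := y - x with hd
  set g : ℝ → ℝ := fun t => ⟪φ' (x + t • d), d⟫ with hg
  have hdnn : (0:ℝ) ≤ ‖d‖ := norm_nonneg d
  have hline : ∀ t : ℝ, HasDerivAt (fun s : ℝ => x + s • d) d t := by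
    intro t
    simpa using (HasDerivAt.const_add x ((hasDerivAt_id t).smul_const d))
  have hderiv : ∀ t ∈ Set.Icc (0:ℝ) 1, HasDerivAt (fun s => φ (x + s • d)) (g t) t := by
    intro t ht
    have h1 := (hdiff t ht).hasFDerivAt.comp_hasDerivAt t (hline t)
    exact h1
  -- continuity of g on Icc 0 1
  have hgcont : ContinuousOn g (Set.Icc (0:ℝ) 1) := by
    have hL : LipschitzOnWith ((K * ‖d‖ ^ 2).toNNReal) g (Set.Icc (0:ℝ) 1) := by
      rw [lipschitzOnWith_iff_dist_le_mul]
      intro s hs t ht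
      have hsub : g s - g t = ⟪φ' (x + s • d) - φ' (x + t • d), d⟫ := by
        simp [g, inner_sub_left]
      have h1 : |g s - g t| ≤ ‖φ' (x + s • d) - φ' (x + t • d)‖ * ‖d‖ := by
        rw [hsub]; exact abs_real_inner_le_norm _ _
      have h2 := hlip s hs t ht
      have h3 : ‖(x + s • d) - (x + t • d)‖ = |s - t| * ‖d‖ := by
        have : (x + s • d) - (x + t • d) = (s - t) • d := by
          rw [sub_smul]; abel
        rw [this, norm_smul, Real.norm_eq_abs]
      rw [Real.dist_eq, Real.dist_eq, Real.coe_toNNReal _ (by positivity)]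
      calc |g s - g t| ≤ ‖φ' (x + s • d) - φ' (x + t • d)‖ * ‖d‖ := h1
        _ ≤ (K * (|s - t| * ‖d‖)) * ‖d‖ := by
            apply mul_le_mul_of_nonneg_right _ hdnn
            rw [← h3]; exact h2
        _ = K * ‖d‖ ^ 2 * |s - t| := by ring
    exact hL.continuousOn
  have huIcc : Set.uIcc (0:ℝ) 1 = Set.Icc (0:ℝ) 1 := Set.uIcc_of_le zero_le_one
  have hgint : IntervalIntegrable g MeasureTheory.volume 0 1 := by
    apply ContinuousOn.intervalIntegrable
    rwa [huIcc]
  have hFTC : ∫ t in (0:ℝ)..1, g t = φ (x + (1:ℝ) • d) - φ (x + (0:ℝ) • d) :=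
    intervalIntegral.integral_eq_sub_of_hasDerivAt (f := fun s => φ (x + s • d))
      (fun t ht => hderiv t (huIcc ▸ ht)) hgint
  have hbound : ∀ t ∈ Set.Icc (0:ℝ) 1, g t ≤ g 0 + K * ‖d‖ ^ 2 * t := by
    intro t ht
    have h1 : g t - g 0 = ⟪φ' (x + t • d) - φ' (x + (0:ℝ) • d), d⟫ := by
      simp [g, inner_sub_left]
    have h2 : |g t - g 0| ≤ ‖φ' (x + t • d) - φ' (x + (0:ℝ) • d)‖ * ‖d‖ := by
      rw [h1]; exact abs_real_inner_le_norm _ _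
    have h3 := hlip t ht 0 (Set.mem_Icc.2 ⟨le_refl 0, zero_le_one⟩)
    have h4 : ‖(x + t • d) - (x + (0:ℝ) • d)‖ = t * ‖d‖ := by
      have he : (x + t • d) - (x + (0:ℝ) • d) = t • d := by
        simp
      rw [he, norm_smul, Real.norm_eq_abs, abs_of_nonneg ht.1]
    have h5 : g t - g 0 ≤ K * (t * ‖d‖) * ‖d‖ := by
      calc g t - g 0 ≤ |g t - g 0| := le_abs_self _
        _ ≤ ‖φ' (x + t • d) - φ' (x + (0:ℝ) • d)‖ * ‖d‖ := h2
        _ ≤ (K * (t * ‖d‖)) * ‖d‖ := by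
            apply mul_le_mul_of_nonneg_right _ hdnn
            rw [← h4]; exact h3
    nlinarith [h5]
  have hintbound : ∫ t in (0:ℝ)..1, g t ≤ ∫ t in (0:ℝ)..1, (g 0 + K * ‖d‖ ^ 2 * t) := by
    apply intervalIntegral.integral_mono_on zero_le_one hgint
    · exact ((continuous_const.add (continuous_const.mul continuous_id')).intervalIntegrable 0 1)
    · exact hbound
  have hcalc : ∫ t in (0:ℝ)..1, (g 0 + K * ‖d‖ ^ 2 * t) = g 0 + K * ‖d‖ ^ 2 / 2 := by
    rw [intervalIntegral.integral_add (f := fun _ => g 0) (g := fun t => K * ‖d‖ ^ 2 * t) intervalIntegrable_const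
      ((continuous_const.mul continuous_id').intervalIntegrable 0 1)]
    rw [intervalIntegral.integral_const_mul, integral_id]
    simp
    ring
  have hg0 : g 0 = ⟪φ' x, d⟫ := by simp [g]
  have hy : x + (1:ℝ) • d = y := by simp [hd]
  have hx0 : x + (0:ℝ) • d = x := by simp
  have := hintbound
  rw [hFTC, hcalc, hg0, hy, hx0] at this
  linarith

/-- For `x ∈ X` and a minimizer `x*` of `φ` over `X`, one has
`φ(x) − φ(x*) ≥ ‖g(x)‖²/(2L)`, where `g(x) = L (x − Π_X(x − ∇φ(x)/L))`. -/
theorem stmt_3 {n : ℕ} (X : Set (EuclideanSpace ℝ (Fin n)))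
    (hXne : X.Nonempty) (hXclosed : IsClosed X) (hXconv : Convex ℝ X)
    (φ : EuclideanSpace ℝ (Fin n) → ℝ)
    (φ' : EuclideanSpace ℝ (Fin n) → EuclideanSpace ℝ (Fin n))
    (hφconv : ConvexOn ℝ X φ)
    (hφdiff : ∀ x ∈ X, HasGradientAt φ (φ' x) x)
    (Lφ : ℝ) (hLφ : 0 < Lφ)
    (hφlip : ∀ x ∈ X, ∀ y ∈ X, ‖φ' x - φ' y‖ ≤ Lφ * ‖x - y‖)
    (L : ℝ) (hL : Lφ ≤ L)
    (proj : EuclideanSpace ℝ (Fin n) → EuclideanSpace ℝ (Fin n))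
    (hproj : ∀ z, proj z ∈ X ∧ ∀ y ∈ X, ‖proj z - z‖ ≤ ‖y - z‖)
    (x : EuclideanSpace ℝ (Fin n)) (hx : x ∈ X)
    (xstar : EuclideanSpace ℝ (Fin n)) (hxstar : xstar ∈ X)
    (hmin : ∀ y ∈ X, φ xstar ≤ φ y) :
    φ x - φ xstar ≥ ‖L • (x - proj (x - (1 / L) • φ' x))‖ ^ 2 / (2 * L) := by
  have hL0 : (0:ℝ) < L := lt_of_lt_of_le hLφ hL
  set z := x - (1 / L) • φ' x with hz
  set p := proj z with hp
  have hpX : p ∈ X := (hproj z).1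
  -- variational inequality for the projection
  have hvar : ∀ w ∈ X, ⟪z - p, w - p⟫ ≤ 0 := by
    have hinf : ‖z - p‖ = ⨅ w : X, ‖z - w‖ := by
      have hne : Nonempty X := hXne.to_subtype
      apply le_antisymm
      · apply le_ciInf
        intro w
        rw [norm_sub_rev]
        have := (hproj z).2 w w.2
        rwa [norm_sub_rev z w]
      · exact ciInf_le ⟨0, fun r ⟨w, hw⟩ => hw ▸ norm_nonneg _⟩ (⟨p, hpX⟩ : X)
    exact (norm_eq_iInf_iff_real_inner_le_zero hXconv hpX).1 hinf
  -- key inequality: ⟪φ' x, x - p⟫ ≥ L ‖x - p‖²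
  have hkey : ⟪φ' x, x - p⟫ ≥ L * ‖x - p‖ ^ 2 := by
    have h1 := hvar x hx
    have h2 : z - p = (x - p) - (1 / L) • φ' x := by
      rw [hz]; abel
    rw [h2, inner_sub_left, real_inner_smul_left] at h1
    have h3 : ⟪x - p, x - p⟫ = ‖x - p‖ ^ 2 := real_inner_self_eq_norm_sq _
    rw [h3] at h1
    have h5 : L * ‖x - p‖ ^ 2 ≤ L * (1 / L * ⟪φ' x, x - p⟫) :=
      mul_le_mul_of_nonneg_left (by linarith) hL0.le
    have h6 : L * (1 / L * ⟪φ' x, x - p⟫) = ⟪φ' x, x - p⟫ := by field_simp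
    linarith
  -- descent lemma applied from x to p
  have hseg : ∀ t ∈ Set.Icc (0:ℝ) 1, x + t • (p - x) ∈ X := by
    intro t ht
    exact hXconv.add_smul_sub_mem hx hpX ht
  have hdesc : φ p ≤ φ x + ⟪φ' x, p - x⟫ + Lφ / 2 * ‖p - x‖ ^ 2 := by
    apply descent_lemma φ φ' x p Lφ hLφ.le
    · intro t ht
      exact hφdiff _ (hseg t ht)
    · intro s hs t ht
      exact hφlip _ (hseg s hs) _ (hseg t ht)
  have hnorm : ‖p - x‖ = ‖x - p‖ := norm_sub_rev p x
  have hinner : ⟪φ' x, p - x⟫ = -⟪φ' x, x - p⟫ := by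
    rw [← inner_neg_right]; congr 1; abel
  have hφp : φ xstar ≤ φ p := hmin p hpX
  have hgn : ‖L • (x - p)‖ ^ 2 = L ^ 2 * ‖x - p‖ ^ 2 := by
    rw [norm_smul, Real.norm_eq_abs, abs_of_pos hL0]; ring
  rw [hgn]
  have h5 : φ p ≤ φ x - L * ‖x - p‖ ^ 2 + Lφ / 2 * ‖x - p‖ ^ 2 := by
    rw [hinner, hnorm] at hdesc
    linarith
  have hnn : (0:ℝ) ≤ ‖x - p‖ ^ 2 := by positivity
  rw [ge_iff_le, div_le_iff₀ (by linarith)]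
  nlinarith [h5, hφp, hnn, hL0]
end

section
/- Let {x^k} be generated by the projected gradient method, i.e., x⁰ ∈ X and x^{k+1} = argmin_{x∈X} {φ(x^k) + ⟨∇φ(x^k), x − x^k⟩ + (L/2)‖x − x^k‖²} for all k ≥ 0. Then for every k ≥ 0, every l ≥ 1, and every minimizer x* of φ over X, one has φ(x^{k+l}) − φ* ≤ (L/(2l))‖x^k − x*‖², where φ* = min_{x∈X} φ(x). -/
open scoped RealInnerProductSpace

variable {E : Type*} [NormedAddCommGroup E] [InnerProductSpace ℝ E] [CompleteSpace E]

/-- derivative of t ↦ φ(x + t•v) -/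
lemma aux_hasDerivAt {φ : E → ℝ} {g : E} {x v : E} {t : ℝ}
    (hd : HasGradientAt φ g (x + t • v)) :
    HasDerivAt (fun s : ℝ => φ (x + s • v)) ⟪g, v⟫ t := by
  have hz : HasDerivAt (fun s : ℝ => x + s • v) v t := by
    simpa using ((hasDerivAt_id t).smul_const v).const_add x
  have := hd.hasFDerivAt.comp_hasDerivAt t hz
  simp at this
  exact this

lemma convex_grad_lower {X : Set E} {φ : E → ℝ}
    (hφconv : ConvexOn ℝ X φ) {x y g : E} (hx : x ∈ X) (hy : y ∈ X)
    (hd : HasGradientAt φ g x) : φ x + ⟪g, y - x⟫ ≤ φ y := by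
  set v := y - x with hv
  have hf : HasDerivAt (fun s : ℝ => φ (x + s • v)) ⟪g, v⟫ 0 := by
    apply aux_hasDerivAt; simpa using hd
  have hslope : Filter.Tendsto (slope (fun s : ℝ => φ (x + s • v)) 0) (nhdsWithin 0 {(0:ℝ)}ᶜ)
      (nhds ⟪g, v⟫) := hasDerivAt_iff_tendsto_slope.mp hf
  have hslope' : Filter.Tendsto (slope (fun s : ℝ => φ (x + s • v)) 0)
      (nhdsWithin 0 (Set.Ioi 0)) (nhds ⟪g, v⟫) :=
    hslope.mono_left (nhdsWithin_mono 0 (fun t ht => ne_of_gt ht))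
  have hbound : ∀ᶠ t in nhdsWithin (0:ℝ) (Set.Ioi 0),
      slope (fun s : ℝ => φ (x + s • v)) 0 t ≤ φ y - φ x := by
    filter_upwards [Ioc_mem_nhdsGT_of_mem (Set.left_mem_Ico.mpr one_pos)] with t ht
    have hmem : x + t • v = (1 - t) • x + t • y := by
      simp [hv, smul_sub, sub_smul]; abel
    have hconv := hφconv.2 hx hy (by linarith [ht.2] : (0:ℝ) ≤ 1 - t) (le_of_lt ht.1)
      (by ring : (1 - t) + t = 1)
    rw [← hmem] at hconv
    rw [slope_def_field]
    simp only [smul_eq_mul] at hconv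
    simp only [zero_smul, add_zero, sub_zero]
    rw [div_le_iff₀ ht.1]
    nlinarith [hconv]
  have := le_of_tendsto hslope' hbound
  linarith [this]

lemma descent_lemma_s5 {X : Set E} (hXconv : Convex ℝ X) {φ : E → ℝ} {φ' : E → E}
    (hφdiff : ∀ x ∈ X, HasGradientAt φ (φ' x) x)
    {Lφ : ℝ} (hφlip : ∀ x ∈ X, ∀ y ∈ X, ‖φ' x - φ' y‖ ≤ Lφ * ‖x - y‖)
    {x y : E} (hx : x ∈ X) (hy : y ∈ X) :
    φ y ≤ φ x + ⟪φ' x, y - x⟫ + Lφ / 2 * ‖y - x‖ ^ 2 := by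
  set v := y - x with hv
  set c : ℝ := ⟪φ' x, v⟫ with hc
  set h : ℝ → ℝ := fun t => φ (x + t • v) - t * c - Lφ / 2 * ‖v‖ ^ 2 * t ^ 2 with hh
  have hzmem : ∀ t ∈ Set.Icc (0:ℝ) 1, x + t • v ∈ X := by
    intro t ht
    have : x + t • v = (1 - t) • x + t • y := by
      simp [hv, smul_sub, sub_smul]; abel
    rw [this]
    exact hXconv hx hy (by linarith [ht.2]) ht.1 (by ring)
  have hderiv : ∀ t ∈ Set.Icc (0:ℝ) 1,
      HasDerivAt h (⟪φ' (x + t • v), v⟫ - c - Lφ * ‖v‖ ^ 2 * t) t := by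
    intro t ht
    have h1 : HasDerivAt (fun s : ℝ => φ (x + s • v)) ⟪φ' (x + t • v), v⟫ t :=
      aux_hasDerivAt (hφdiff _ (hzmem t ht))
    have h2 : HasDerivAt (fun s : ℝ => s * c) c t := by
      simpa using (hasDerivAt_id t).mul_const c
    have h3 : HasDerivAt (fun s : ℝ => Lφ / 2 * ‖v‖ ^ 2 * s ^ 2)
        (Lφ / 2 * ‖v‖ ^ 2 * (2 * t)) t := by
      have := (hasDerivAt_pow 2 t).const_mul (Lφ / 2 * ‖v‖ ^ 2)
      simpa using this
    have := (h1.sub h2).sub h3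
    refine this.congr_deriv ?_
    ring
  have hanti : AntitoneOn h (Set.Icc 0 1) := by
    apply antitoneOn_of_deriv_nonpos (convex_Icc 0 1)
    · exact fun t ht => (hderiv t ht).continuousAt.continuousWithinAt
    · intro t ht
      rw [interior_Icc] at ht
      exact ((hderiv t (Set.mem_Icc_of_Ioo ht)).differentiableAt).differentiableWithinAt
    · intro t ht
      rw [interior_Icc] at ht
      rw [(hderiv t (Set.mem_Icc_of_Ioo ht)).deriv]
      have hineq : ⟪φ' (x + t • v) - φ' x, v⟫ ≤ Lφ * t * ‖v‖ ^ 2 := by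
        calc ⟪φ' (x + t • v) - φ' x, v⟫ ≤ ‖φ' (x + t • v) - φ' x‖ * ‖v‖ :=
              real_inner_le_norm _ _
          _ ≤ (Lφ * ‖x + t • v - x‖) * ‖v‖ := by
              apply mul_le_mul_of_nonneg_right _ (norm_nonneg v)
              exact hφlip _ (hzmem t (Set.mem_Icc_of_Ioo ht)) _ hx
          _ = Lφ * t * ‖v‖ ^ 2 := by
              rw [add_sub_cancel_left, norm_smul, Real.norm_eq_abs,
                abs_of_pos ht.1]; ring
      have hexp : ⟪φ' (x + t • v), v⟫ - c = ⟪φ' (x + t • v) - φ' x, v⟫ := by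
        rw [inner_sub_left, hc]
      linarith [hexp, hineq]
  have h10 := hanti (Set.left_mem_Icc.mpr zero_le_one) (Set.right_mem_Icc.mpr zero_le_one)
    zero_le_one
  simp only [hh, one_smul, zero_smul, add_zero, one_mul, mul_one, zero_mul, mul_zero,
    sub_zero, one_pow, zero_pow, ne_eq, OfNat.ofNat_ne_zero, not_false_eq_true] at h10
  have hxy : x + v = y := by rw [hv]; abel
  rw [hxy] at h10
  linarith [h10]

/-- For the projected gradient method
`x^{k+1} = argmin_{x∈X} {φ(x^k) + ⟨∇φ(x^k), x − x^k⟩ + (L/2)‖x − x^k‖²}`, one has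
`φ(x^{k+l}) − φ* ≤ (L/(2l))‖x^k − x*‖²` for every `k ≥ 0`, `l ≥ 1` and every minimizer
`x*` of `φ` over `X`. -/
theorem stmt_5 {n : ℕ} (X : Set (EuclideanSpace ℝ (Fin n)))
    (hXne : X.Nonempty) (hXclosed : IsClosed X) (hXconv : Convex ℝ X)
    (φ : EuclideanSpace ℝ (Fin n) → ℝ)
    (φ' : EuclideanSpace ℝ (Fin n) → EuclideanSpace ℝ (Fin n))
    (hφconv : ConvexOn ℝ X φ)
    (hφdiff : ∀ x ∈ X, HasGradientAt φ (φ' x) x)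
    (Lφ : ℝ) (hLφ : 0 < Lφ)
    (hφlip : ∀ x ∈ X, ∀ y ∈ X, ‖φ' x - φ' y‖ ≤ Lφ * ‖x - y‖)
    (L : ℝ) (hL : Lφ ≤ L)
    (x : ℕ → EuclideanSpace ℝ (Fin n)) (hx0 : x 0 ∈ X)
    (hiter : ∀ k : ℕ, x (k + 1) ∈ X ∧ ∀ y ∈ X,
      φ (x k) + ⟪φ' (x k), x (k + 1) - x k⟫ + L / 2 * ‖x (k + 1) - x k‖ ^ 2 ≤
        φ (x k) + ⟪φ' (x k), y - x k⟫ + L / 2 * ‖y - x k‖ ^ 2) :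
    ∀ (k l : ℕ), 1 ≤ l →
      ∀ xstar ∈ X, (∀ y ∈ X, φ xstar ≤ φ y) →
        φ (x (k + l)) - φ xstar ≤ L / (2 * l) * ‖x k - xstar‖ ^ 2 := by
  have hLpos : 0 < L := lt_of_lt_of_le hLφ hL
  have hmem : ∀ j, x j ∈ X := by
    intro j
    induction j with
    | zero => exact hx0
    | succ j _ => exact (hiter j).1
  -- key per-step inequality
  have key : ∀ j, ∀ y ∈ X,
      φ (x (j + 1)) ≤ φ y + L / 2 * ‖y - x j‖ ^ 2 - L / 2 * ‖y - x (j + 1)‖ ^ 2 := by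
    intro j y hy
    set p := x j with hp
    set s := x (j + 1) with hs
    set g := φ' p with hg
    -- first-order optimality of s
    have ha : 0 ≤ ⟪g, y - s⟫ + L * ⟪s - p, y - s⟫ := by
      set a : ℝ := ⟪g, y - s⟫ + L * ⟪s - p, y - s⟫ with hadef
      have hbound : ∀ t ∈ Set.Ioc (0:ℝ) 1, 0 ≤ a + L / 2 * ‖y - s‖ ^ 2 * t := by
        intro t ht
        have hytmem : s + t • (y - s) ∈ X := by
          have : s + t • (y - s) = (1 - t) • s + t • y := by
            simp [smul_sub, sub_smul]; abel
          rw [this]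
          exact hXconv (hmem (j+1)) hy (by linarith [ht.2]) (le_of_lt ht.1) (by ring)
        have hq := (hiter j).2 _ hytmem
        have hsplit : s + t • (y - s) - p = (s - p) + t • (y - s) := by abel
        have hnorm_t : ‖s + t • (y - s) - p‖ ^ 2
            = ‖s - p‖ ^ 2 + 2 * (t * ⟪s - p, y - s⟫) + t ^ 2 * ‖y - s‖ ^ 2 := by
          rw [hsplit, norm_add_sq_real, real_inner_smul_right, norm_smul,
            Real.norm_eq_abs, mul_pow, sq_abs]
        have hinner_t : ⟪g, s + t • (y - s) - p⟫ = ⟪g, s - p⟫ + t * ⟪g, y - s⟫ := by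
          rw [hsplit, inner_add_right, real_inner_smul_right]
        rw [hinner_t, hnorm_t] at hq
        have ht1 : 0 < t := ht.1
        rw [hadef]
        nlinarith [hq, ht1]
      have htend : Filter.Tendsto (fun t : ℝ => a + L / 2 * ‖y - s‖ ^ 2 * t)
          (nhdsWithin 0 (Set.Ioi 0)) (nhds a) := by
        have : Filter.Tendsto (fun t : ℝ => a + L / 2 * ‖y - s‖ ^ 2 * t)
            (nhds 0) (nhds (a + L / 2 * ‖y - s‖ ^ 2 * 0)) := by
          exact (tendsto_const_nhds.add ((tendsto_const_nhds).mul Filter.tendsto_id))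
        simpa using this.mono_left nhdsWithin_le_nhds
      refine ge_of_tendsto htend ?_
      filter_upwards [Ioc_mem_nhdsGT_of_mem (Set.left_mem_Ico.mpr one_pos)] with t ht
      exact hbound t ht
    -- descent + convexity
    have hdesc : φ s ≤ φ p + ⟪g, s - p⟫ + L / 2 * ‖s - p‖ ^ 2 := by
      have := descent_lemma_s5 hXconv hφdiff hφlip (hmem j) (hmem (j+1))
      have hsq : (0:ℝ) ≤ ‖s - p‖ ^ 2 := sq_nonneg _
      nlinarith [this]
    have hconvlow : φ p + ⟪g, y - p⟫ ≤ φ y :=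
      convex_grad_lower hφconv (hmem j) hy (hφdiff _ (hmem j))
    have hsplit : y - p = (s - p) + (y - s) := by abel
    have hnorm : ‖y - p‖ ^ 2 = ‖s - p‖ ^ 2 + 2 * ⟪s - p, y - s⟫ + ‖y - s‖ ^ 2 := by
      rw [hsplit, norm_add_sq_real]
    have hinner : ⟪g, y - p⟫ = ⟪g, s - p⟫ + ⟪g, y - s⟫ := by
      rw [hsplit, inner_add_right]
    have hnorm2 : L / 2 * ‖y - p‖ ^ 2
        = L / 2 * ‖s - p‖ ^ 2 + L * ⟪s - p, y - s⟫ + L / 2 * ‖y - s‖ ^ 2 := by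
      rw [hnorm]; ring
    linarith [ha, hdesc, hconvlow, hnorm2, hinner]
  -- monotonicity
  have mono : ∀ j, φ (x (j + 1)) ≤ φ (x j) := by
    intro j
    have hk := key j (x j) (hmem j)
    simp only [sub_self, norm_zero] at hk
    have hsq : (0:ℝ) ≤ L / 2 * ‖x j - x (j + 1)‖ ^ 2 := by positivity
    linarith [hk, hsq]
  intro k l hl xstar hxstar hminim
  -- telescoped bound by induction
  have A : ∀ m : ℕ, (m : ℝ) * (φ (x (k + m)) - φ xstar)
      ≤ L / 2 * (‖x k - xstar‖ ^ 2 - ‖x (k + m) - xstar‖ ^ 2) := by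
    intro m
    induction m with
    | zero => simp
    | succ m ih =>
      have hk := key (k + m) xstar hxstar
      rw [norm_sub_rev xstar (x (k + m)), norm_sub_rev xstar (x (k + m + 1))] at hk
      have hmono : φ (x (k + m + 1)) ≤ φ (x (k + m)) := mono (k + m)
      have hmul : (m : ℝ) * (φ (x (k + m + 1)) - φ xstar)
          ≤ (m : ℝ) * (φ (x (k + m)) - φ xstar) :=
        mul_le_mul_of_nonneg_left (by linarith) (Nat.cast_nonneg m)
      have hkm : k + (m + 1) = k + m + 1 := by ring
      rw [hkm]
      push_cast
      nlinarith [ih, hk, hmul]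
  have hlpos : (0:ℝ) < (l : ℝ) := by exact_mod_cast hl
  have hA := A l
  rw [div_mul_eq_mul_div, le_div_iff₀ (by positivity : (0:ℝ) < 2 * (l:ℝ))]
  have hB : (0:ℝ) ≤ L * ‖x (k + l) - xstar‖ ^ 2 :=
    mul_nonneg (le_of_lt hLpos) (sq_nonneg _)
  nlinarith [hA, hB]
end

section
/- Suppose in addition that φ is strongly convex on X with modulus σ > 0. Let {x^k} be generated by the projected gradient method, i.e., x⁰ ∈ X and x^{k+1} = argmin_{x∈X} {φ(x^k) + ⟨∇φ(x^k), x − x^k⟩ + (L/2)‖x − x^k‖²}. Then for every ε > 0, the strict inequality φ(x^k) − φ* < ε holds whenever k ≥ 2⌈L/σ⌉⌈log((φ(x⁰) − φ*)/ε)⌉ + 1, where φ* = min_{x∈X} φ(x). -/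
open scoped RealInnerProductSpace

section Aux

variable {E : Type*} [NormedAddCommGroup E] [InnerProductSpace ℝ E] [CompleteSpace E]

/-- first-order condition for convexity -/
lemma aux_grad_convex {s : Set E} {f : E → ℝ} (hf : ConvexOn ℝ s f)
    {x y : E} (hx : x ∈ s) (hy : y ∈ s) {g : E} (hg : HasGradientAt f g x) :
    f x + ⟪g, y - x⟫ ≤ f y := by
  have hline : HasDerivAt (fun t : ℝ => x + t • (y - x)) (y - x) 0 := by
    simpa using ((hasDerivAt_id (0 : ℝ)).smul_const (y - x)).const_add x
  have hc : HasDerivAt (fun t : ℝ => f (x + t • (y - x))) ⟪g, y - x⟫ 0 := by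
    have hg' : HasFDerivAt f (InnerProductSpace.toDual ℝ E g) (x + (0:ℝ) • (y - x)) := by
      simpa using hg.hasFDerivAt
    have := hg'.comp_hasDerivAt 0 hline
    simpa [InnerProductSpace.toDual_apply_apply, Function.comp_def] using this
  rw [hasDerivAt_iff_tendsto_slope] at hc
  have hmono : (nhdsWithin (0:ℝ) (Set.Ioi 0)) ≤ (nhdsWithin (0:ℝ) {(0:ℝ)}ᶜ) := by
    apply nhdsWithin_mono
    intro t ht
    exact ne_of_gt ht
  have hc' : Filter.Tendsto (slope (fun t : ℝ => f (x + t • (y - x))) 0)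
      (nhdsWithin (0:ℝ) (Set.Ioi 0)) (nhds ⟪g, y - x⟫) := hc.mono_left hmono
  have hev : ∀ᶠ t in nhdsWithin (0:ℝ) (Set.Ioi 0),
      slope (fun t : ℝ => f (x + t • (y - x))) 0 t ≤ f y - f x := by
    filter_upwards [Ioc_mem_nhdsGT_of_mem (Set.left_mem_Ico.mpr one_pos)] with t ht
    have ht0 : 0 < t := ht.1
    have ht1 : t ≤ 1 := ht.2
    have hpt : x + t • (y - x) = (1 - t) • x + t • y := by module
    have hcv : f (x + t • (y - x)) ≤ (1 - t) * f x + t * f y := by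
      rw [hpt]
      simpa using hf.2 hx hy (by linarith : (0:ℝ) ≤ 1 - t) ht0.le (by ring)
    rw [slope_def_field]
    simp only [zero_smul, add_zero, sub_zero]
    rw [div_le_iff₀ ht0]
    nlinarith
  have := le_of_tendsto hc' hev
  linarith

/-- descent lemma -/
lemma aux_descent {s : Set E} (hs : Convex ℝ s) {f : E → ℝ} {g : E → E} {Lf : ℝ}
    (hLf : 0 ≤ Lf)
    (hd : ∀ z ∈ s, HasGradientAt f (g z) z)
    (hlip : ∀ a ∈ s, ∀ b ∈ s, ‖g a - g b‖ ≤ Lf * ‖a - b‖)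
    {x y : E} (hx : x ∈ s) (hy : y ∈ s) :
    f y ≤ f x + ⟪g x, y - x⟫ + Lf / 2 * ‖y - x‖ ^ 2 := by
  set v := y - x with hv
  have hseg : ∀ t : ℝ, t ∈ Set.Icc (0:ℝ) 1 → x + t • v ∈ s := by
    intro t ht
    have : x + t • v = (1 - t) • x + t • y := by simp only [hv]; module
    rw [this]
    exact hs hx hy (by linarith [ht.2]) ht.1 (by ring)
  set H : ℝ → ℝ := fun t => f (x + t • v) - t * ⟪g x, v⟫ - Lf / 2 * t ^ 2 * ‖v‖ ^ 2 with hH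
  have hHd : ∀ t ∈ Set.Icc (0:ℝ) 1,
      HasDerivAt H (⟪g (x + t • v), v⟫ - ⟪g x, v⟫ - Lf * t * ‖v‖ ^ 2) t := by
    intro t ht
    have hline : HasDerivAt (fun t : ℝ => x + t • v) v t := by
      simpa using ((hasDerivAt_id t).smul_const v).const_add x
    have h1 : HasDerivAt (fun t : ℝ => f (x + t • v)) ⟪g (x + t • v), v⟫ t := by
      have := ((hd _ (hseg t ht)).hasFDerivAt).comp_hasDerivAt t hline
      simpa [InnerProductSpace.toDual_apply_apply, Function.comp_def] using this
    have h2 : HasDerivAt (fun t : ℝ => t * ⟪g x, v⟫) ⟪g x, v⟫ t := by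
      simpa using (hasDerivAt_id t).mul_const ⟪g x, v⟫
    have h3 : HasDerivAt (fun t : ℝ => Lf / 2 * t ^ 2 * ‖v‖ ^ 2) (Lf * t * ‖v‖ ^ 2) t := by
      have := (((hasDerivAt_pow 2 t).const_mul (Lf / 2)).mul_const (‖v‖ ^ 2))
      exact this.congr_deriv (by rw [show (2:ℕ) - 1 = 1 from rfl]; push_cast; ring)
    exact (h1.sub h2).sub h3
  have hanti : AntitoneOn H (Set.Icc (0:ℝ) 1) := by
    apply antitoneOn_of_deriv_nonpos (convex_Icc 0 1)
    · intro t ht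
      exact (hHd t ht).continuousAt.continuousWithinAt
    · intro t ht
      rw [interior_Icc] at ht
      exact ((hHd t (Set.mem_Icc_of_Ioo ht)).differentiableAt).differentiableWithinAt
    · intro t ht
      rw [interior_Icc] at ht
      rw [(hHd t (Set.mem_Icc_of_Ioo ht)).deriv]
      have hib : ⟪g (x + t • v) - g x, v⟫ ≤ Lf * t * ‖v‖ ^ 2 := by
        calc ⟪g (x + t • v) - g x, v⟫ ≤ ‖g (x + t • v) - g x‖ * ‖v‖ :=
              real_inner_le_norm _ _
          _ ≤ (Lf * ‖(x + t • v) - x‖) * ‖v‖ := by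
              gcongr
              exact hlip _ (hseg t (Set.mem_Icc_of_Ioo ht)) x hx
          _ = Lf * t * ‖v‖ ^ 2 := by
              have : ‖(x + t • v) - x‖ = t * ‖v‖ := by
                simp [norm_smul, abs_of_pos ht.1]
              rw [this]; ring
      rw [inner_sub_left] at hib
      linarith
  have h01 := hanti (Set.left_mem_Icc.mpr one_pos.le) (Set.right_mem_Icc.mpr one_pos.le)
    one_pos.le
  simp only [hH, one_smul, zero_smul, add_zero, one_pow, mul_one, one_mul] at h01
  have : x + v = y := by simp [hv]
  rw [this] at h01
  simp only [zero_pow, mul_zero, zero_mul, sub_zero] at h01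
  linarith

end Aux

/-- If `φ` is in addition strongly convex on `X` with modulus `σ > 0`, then for
the projected gradient method and any `ε > 0`, `φ(x^k) − φ* < ε` whenever
`k ≥ 2⌈L/σ⌉⌈log₂((φ(x⁰) − φ*)/ε)⌉ + 1`. -/
theorem stmt_8 {n : ℕ} (X : Set (EuclideanSpace ℝ (Fin n)))
    (hXne : X.Nonempty) (hXclosed : IsClosed X) (hXconv : Convex ℝ X)
    (φ : EuclideanSpace ℝ (Fin n) → ℝ)
    (φ' : EuclideanSpace ℝ (Fin n) → EuclideanSpace ℝ (Fin n))
    (hφconv : ConvexOn ℝ X φ)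
    (hφdiff : ∀ x ∈ X, HasGradientAt φ (φ' x) x)
    (Lφ : ℝ) (hLφ : 0 < Lφ)
    (hφlip : ∀ x ∈ X, ∀ y ∈ X, ‖φ' x - φ' y‖ ≤ Lφ * ‖x - y‖)
    (σ : ℝ) (hσ : 0 < σ) (hφsc : StrongConvexOn X σ φ)
    (L : ℝ) (hL : Lφ ≤ L)
    (xstar : EuclideanSpace ℝ (Fin n)) (hxstar : xstar ∈ X)
    (hmin : ∀ y ∈ X, φ xstar ≤ φ y)
    (x : ℕ → EuclideanSpace ℝ (Fin n)) (hx0 : x 0 ∈ X)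
    (hiter : ∀ k : ℕ, x (k + 1) ∈ X ∧ ∀ y ∈ X,
      φ (x k) + ⟪φ' (x k), x (k + 1) - x k⟫ + L / 2 * ‖x (k + 1) - x k‖ ^ 2 ≤
        φ (x k) + ⟪φ' (x k), y - x k⟫ + L / 2 * ‖y - x k‖ ^ 2) :
    ∀ ε : ℝ, 0 < ε → ∀ k : ℕ,
      (k : ℝ) ≥ 2 * (⌈L / σ⌉ : ℝ) * (⌈Real.logb 2 ((φ (x 0) - φ xstar) / ε)⌉ : ℝ) + 1 →
        φ (x k) - φ xstar < ε := by
  have hLpos : 0 < L := lt_of_lt_of_le hLφ hL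
  have hσL : 0 < σ + L := by linarith
  have hxk : ∀ k, x k ∈ X := by
    intro k
    induction k with
    | zero => exact hx0
    | succ m _ => exact (hiter m).1
  set ρ : ℝ := L / (σ + L) with hρ
  have hρpos : 0 < ρ := div_pos hLpos hσL
  have hρlt : ρ < 1 := (div_lt_one hσL).mpr (by linarith)
  -- per-step contraction
  have hstep : ∀ k, φ (x (k + 1)) - φ xstar ≤ ρ * (φ (x k) - φ xstar) := by
    intro k
    set t : ℝ := σ / (σ + L) with htdef
    have ht0 : 0 < t := div_pos hσ hσL
    have ht1 : t < 1 := (div_lt_one hσL).mpr (by linarith)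
    have hρt : ρ = 1 - t := by rw [hρ, htdef]; field_simp; ring
    set u := x k with hu
    set w := x (k + 1) with hw
    set yt := (1 - t) • u + t • xstar with hyt
    have hytX : yt ∈ X := hXconv (hxk k) hxstar (by linarith) ht0.le (by ring)
    have hd1 : φ w ≤ φ u + ⟪φ' u, w - u⟫ + L / 2 * ‖w - u‖ ^ 2 := by
      have := aux_descent hXconv hLφ.le hφdiff hφlip (hxk k) (hxk (k + 1))
      have h2 : Lφ / 2 * ‖w - u‖ ^ 2 ≤ L / 2 * ‖w - u‖ ^ 2 := by
        have := sq_nonneg ‖w - u‖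
        nlinarith
      linarith
    have hd2 := (hiter k).2 yt hytX
    have hd3 : ⟪φ' u, yt - u⟫ ≤ φ yt - φ u :=
      le_sub_iff_add_le'.mpr (by
        have := aux_grad_convex hφconv (hxk k) hytX (hφdiff u (hxk k))
        linarith)
    have hd4 : ‖yt - u‖ ^ 2 = t ^ 2 * ‖u - xstar‖ ^ 2 := by
      have h1 : yt - u = t • (xstar - u) := by simp only [hyt]; module
      rw [h1, norm_smul, mul_pow, norm_sub_rev]
      simp [abs_of_pos ht0]
    have hd5 : φ yt ≤ (1 - t) * φ u + t * φ xstar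
        - (1 - t) * t * (σ / 2 * ‖u - xstar‖ ^ 2) := by
      simpa using hφsc.2 (hxk k) hxstar (by linarith : (0:ℝ) ≤ 1 - t) ht0.le (by ring)
    have hcancel : L / 2 * (t ^ 2 * ‖u - xstar‖ ^ 2)
        = (1 - t) * t * (σ / 2 * ‖u - xstar‖ ^ 2) := by
      have h1t : 1 - t = L / (σ + L) := by rw [← hρ, hρt]
      rw [h1t, htdef]
      field_simp
    rw [hρt]
    have := hd2
    rw [hd4] at hd2
    nlinarith [hd1, hd2, hd3, hd5, hcancel]
  have hnonneg : ∀ k, 0 ≤ φ (x k) - φ xstar := fun k => by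
    linarith [hmin (x k) (hxk k)]
  have hgeom : ∀ k, φ (x k) - φ xstar ≤ ρ ^ k * (φ (x 0) - φ xstar) := by
    intro k
    induction k with
    | zero => simp
    | succ m ih =>
      calc φ (x (m + 1)) - φ xstar ≤ ρ * (φ (x m) - φ xstar) := hstep m
        _ ≤ ρ * (ρ ^ m * (φ (x 0) - φ xstar)) := by
            exact mul_le_mul_of_nonneg_left ih hρpos.le
        _ = ρ ^ (m + 1) * (φ (x 0) - φ xstar) := by ring
  intro ε hε k hk
  set Δ := φ (x 0) - φ xstar with hΔ
  have hΔ0 : 0 ≤ Δ := hnonneg 0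
  have hρpow_le_one : ∀ m : ℕ, ρ ^ m ≤ 1 := fun m =>
    pow_le_one₀ hρpos.le hρlt.le
  by_cases hcase : Δ < ε
  · calc φ (x k) - φ xstar ≤ ρ ^ k * Δ := hgeom k
      _ ≤ 1 * Δ := mul_le_mul_of_nonneg_right (hρpow_le_one k) hΔ0
      _ = Δ := one_mul Δ
      _ < ε := hcase
  · push_neg at hcase
    have hΔpos : 0 < Δ := lt_of_lt_of_le hε hcase
    have hratio : 1 ≤ Δ / ε := (one_le_div hε).mpr hcase
    have hlogb0 : 0 ≤ Real.logb 2 (Δ / ε) := Real.logb_nonneg one_lt_two hratio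
    set c : ℤ := ⌈Real.logb 2 (Δ / ε)⌉ with hc
    set m : ℤ := ⌈L / σ⌉ with hm
    have hc0 : 0 ≤ c := Int.ceil_nonneg hlogb0
    have hm1 : 1 ≤ m := by
      have : (0:ℝ) < L / σ := div_pos hLpos hσ
      exact_mod_cast Int.ceil_pos.mpr this
    set cn : ℕ := c.toNat with hcn
    set mn : ℕ := m.toNat with hmn
    have hcrc : (c : ℝ) = (cn : ℝ) := by
      rw [hcn]; exact_mod_cast (Int.toNat_of_nonneg hc0).symm
    have hmrm : (m : ℝ) = (mn : ℝ) := by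
      rw [hmn]; exact_mod_cast (Int.toNat_of_nonneg (by linarith : (0:ℤ) ≤ m)).symm
    -- k ≥ 2 * mn * cn + 1 as naturals
    have hkN : 2 * mn * cn + 1 ≤ k := by
      have : ((2 * mn * cn + 1 : ℕ) : ℝ) ≤ (k : ℝ) := by
        push_cast
        rw [hcrc, hmrm] at hk
        linarith [hk]
      exact_mod_cast this
    -- ρ ^ mn ≤ 1 / 2
    have hLσm : L / σ ≤ (mn : ℝ) := by
      rw [← hmrm]; exact Int.le_ceil _
    have hbern : (2 : ℝ) ≤ (1 + σ / L) ^ mn := by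
      have h1 : 1 + (mn : ℝ) * (σ / L) ≤ (1 + σ / L) ^ mn := by
        have := one_add_mul_le_pow (a := σ / L)
          (by linarith [div_pos hσ hLpos] : (-2:ℝ) ≤ σ / L) mn
        linarith [this]
      have h2 : (2:ℝ) ≤ 1 + (mn : ℝ) * (σ / L) := by
        have hσLpos : 0 < σ / L := div_pos hσ hLpos
        have : 1 ≤ (mn : ℝ) * (σ / L) := by
          have := mul_le_mul_of_nonneg_right hLσm hσLpos.le
          have heq : L / σ * (σ / L) = 1 := by field_simp
          linarith [this, heq ▸ this]
        linarith
      linarith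
    have hρm : ρ ^ mn ≤ 1 / 2 := by
      have h2 : (σ + L) / L = 1 + σ / L := by
        rw [add_div, div_self hLpos.ne', add_comm]
      have hρinv : ρ = (1 + σ / L)⁻¹ := by
        rw [hρ, ← h2, inv_div]
      rw [hρinv, inv_pow, one_div]
      exact inv_anti₀ (by norm_num) hbern
    -- (1/2) ^ cn * Δ ≤ ε
    have hhalfc : (1 / 2 : ℝ) ^ cn * Δ ≤ ε := by
      have h2c : Δ / ε ≤ (2 : ℝ) ^ cn := by
        have hlogle : Real.logb 2 (Δ / ε) ≤ (cn : ℝ) := by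
          rw [← hcrc]; exact Int.le_ceil _
        have := (Real.logb_le_iff_le_rpow one_lt_two (by positivity : (0:ℝ) < Δ / ε)).mp hlogle
        rwa [Real.rpow_natCast] at this
      have hΔle : Δ ≤ (2:ℝ) ^ cn * ε := (div_le_iff₀ hε).mp h2c
      have hpow : (1 / 2 : ℝ) ^ cn * (2:ℝ) ^ cn = 1 := by
        rw [← mul_pow]; norm_num
      calc (1 / 2 : ℝ) ^ cn * Δ ≤ (1 / 2 : ℝ) ^ cn * ((2:ℝ) ^ cn * ε) :=
            mul_le_mul_of_nonneg_left hΔle (by positivity)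
        _ = ((1 / 2 : ℝ) ^ cn * (2:ℝ) ^ cn) * ε := by ring
        _ = ε := by rw [hpow, one_mul]
    -- chain
    have hmono : ρ ^ k ≤ ρ ^ (2 * mn * cn + 1) :=
      pow_le_pow_of_le_one hρpos.le hρlt.le hkN
    have hsplit : ρ ^ (2 * mn * cn + 1) = ρ * ((ρ ^ mn) ^ cn) ^ 2 := by
      rw [← pow_mul, ← pow_mul]
      rw [← pow_succ']
      congr 1
      ring
    have hpc : ((ρ ^ mn) ^ cn) ^ 2 ≤ (1 / 2 : ℝ) ^ cn := by
      have h1 : (ρ ^ mn) ^ cn ≤ (1 / 2 : ℝ) ^ cn :=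
        pow_le_pow_left₀ (by positivity) hρm cn
      have h2 : ((ρ ^ mn) ^ cn) ^ 2 ≤ ((ρ ^ mn) ^ cn) ^ 1 :=
        pow_le_pow_of_le_one (by positivity)
          (pow_le_one₀ (by positivity) (pow_le_one₀ hρpos.le hρlt.le)) (by norm_num)
      calc ((ρ ^ mn) ^ cn) ^ 2 ≤ ((ρ ^ mn) ^ cn) ^ 1 := h2
        _ = (ρ ^ mn) ^ cn := pow_one _
        _ ≤ (1 / 2 : ℝ) ^ cn := h1
    calc φ (x k) - φ xstar ≤ ρ ^ k * Δ := hgeom k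
      _ ≤ ρ ^ (2 * mn * cn + 1) * Δ := mul_le_mul_of_nonneg_right hmono hΔ0
      _ = ρ * (((ρ ^ mn) ^ cn) ^ 2 * Δ) := by rw [hsplit]; ring
      _ ≤ ρ * ((1 / 2 : ℝ) ^ cn * Δ) := by
          apply mul_le_mul_of_nonneg_left _ hρpos.le
          exact mul_le_mul_of_nonneg_right hpc hΔ0
      _ < 1 * ((1 / 2 : ℝ) ^ cn * Δ) := by
          apply mul_lt_mul_of_pos_right hρlt
          positivity
      _ = (1 / 2 : ℝ) ^ cn * Δ := one_mul _
      _ ≤ ε := hhalfc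
end

section
/- Let μ* ∈ −K be a Lagrange multiplier for the problem f* = min{f(x) : Ax − b ∈ K*, x ∈ X}, i.e., f* = inf{f(x) + ⟨μ*, Ax − b⟩ : x ∈ X}. Then for every x ∈ X, f(x) − f* ≥ −‖μ*‖ · d_{K*}(Ax − b), where d_{K*}(y) denotes the Euclidean distance from y to K*. -/
open scoped RealInnerProductSpace

/-- If `μ* ∈ −K` is a Lagrange multiplier for
`f* = min{f(x) : Ax − b ∈ K*, x ∈ X}`, i.e. `f* = inf{f(x) + ⟨μ*, Ax − b⟩ : x ∈ X}`,
then `f(x) − f* ≥ −‖μ*‖ d_{K*}(Ax − b)` for every `x ∈ X`. -/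
theorem stmt_9 {n m : ℕ} (X : Set (EuclideanSpace ℝ (Fin n)))
    (hXclosed : IsClosed X) (hXconv : Convex ℝ X)
    (f : EuclideanSpace ℝ (Fin n) → ℝ)
    (f' : EuclideanSpace ℝ (Fin n) → EuclideanSpace ℝ (Fin n))
    (hfconv : ConvexOn ℝ X f)
    (hfdiff : ∀ x ∈ X, HasGradientAt f (f' x) x)
    (A : EuclideanSpace ℝ (Fin n) →L[ℝ] EuclideanSpace ℝ (Fin m))
    (b : EuclideanSpace ℝ (Fin m))
    (K : Set (EuclideanSpace ℝ (Fin m)))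
    (hKclosed : IsClosed K) (hKconv : Convex ℝ K)
    (hKcone : ∀ c : ℝ, 0 ≤ c → ∀ z ∈ K, c • z ∈ K)
    (Kstar : Set (EuclideanSpace ℝ (Fin m)))
    (hKstar : Kstar = {s | ∀ z ∈ K, 0 ≤ ⟪s, z⟫})
    (fstar : ℝ) (xopt : EuclideanSpace ℝ (Fin n))
    (hxoptX : xopt ∈ X) (hxoptfeas : A xopt - b ∈ Kstar)
    (hxoptmin : ∀ x ∈ X, A x - b ∈ Kstar → f xopt ≤ f x)
    (hfstar : fstar = f xopt)
    (μstar : EuclideanSpace ℝ (Fin m)) (hμK : -μstar ∈ K)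
    (hlag : IsGLB ((fun x => f x + ⟪μstar, A x - b⟫) '' X) fstar) :
    ∀ x ∈ X, f x - fstar ≥ -‖μstar‖ * Metric.infDist (A x - b) Kstar := by
  intro x hx
  have hge : fstar ≤ f x + ⟪μstar, A x - b⟫ := hlag.1 ⟨x, hx, rfl⟩
  have hne : Kstar.Nonempty := ⟨A xopt - b, hxoptfeas⟩
  set v := A x - b with hv
  have key : ⟪μstar, v⟫ ≤ ‖μstar‖ * Metric.infDist v Kstar := by
    have hbound : ∀ y ∈ Kstar, ⟪μstar, v⟫ ≤ ‖μstar‖ * dist v y := by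
      intro y hy
      have h1 : ⟪μstar, y⟫ ≤ 0 := by
        have := (hKstar ▸ hy) (-μstar) hμK
        rw [inner_neg_right] at this
        have h2 : ⟪y, μstar⟫ ≤ 0 := by linarith
        rwa [real_inner_comm] at h2
      have h3 : ⟪μstar, v - y⟫ ≤ ‖μstar‖ * ‖v - y‖ := real_inner_le_norm _ _
      have h4 : ⟪μstar, v⟫ - ⟪μstar, y⟫ ≤ ‖μstar‖ * ‖v - y‖ := by
        rwa [inner_sub_right] at h3
      rw [dist_eq_norm]
      linarith
    rcases eq_or_ne μstar 0 with h0 | h0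
    · simp [h0]
    · have hnorm : (0:ℝ) < ‖μstar‖ := norm_pos_iff.mpr h0
      rw [mul_comm, ← div_le_iff₀ hnorm]
      refine le_of_not_gt fun hlt => ?_
      obtain ⟨y, hy, hdy⟩ := (Metric.infDist_lt_iff hne).mp hlt
      have := hbound y hy
      rw [← div_le_iff₀' hnorm] at this
      linarith
  linarith
end

section
/- Let {x^k} be generated by the iterative hard thresholding method, i.e., x⁰ ∈ B and for each k, x^{k+1} ∈ Argmin_{x∈B} {f(x^k) + ⟨∇f(x^k), x − x^k⟩ + (L/2)‖x − x^k‖² + λ‖x‖₀}. Define I₀ = {i : l_i = u_i = 0}, and for each i ∉ I₀ set δ_i = min(u_i, √(2λ/L)) if l_i = 0, δ_i = min(−l_i, √(2λ/L)) if u_i = 0, and δ_i = min(−l_i, u_i, √(2λ/L)) otherwise, and δ = min_{i∉I₀} δ_i > 0. Then for every k ≥ 0 and every coordinate j, if x^{k+1}_j ≠ 0 then |x^{k+1}_j| ≥ δ. -/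
open scoped RealInnerProductSpace Classical

/-- The "l₀ norm": number of nonzero components (as a real number). -/
noncomputable def norm0 {n : ℕ} (x : EuclideanSpace ℝ (Fin n)) : ℝ :=
  ((Finset.univ.filter fun i => x i ≠ 0).card : ℝ)

/-- The quantity `δ_i` of the paper: `min(u_i, √(2λ/L))` if `l_i = 0`,
`min(−l_i, √(2λ/L))` if `u_i = 0`, and `min(−l_i, u_i, √(2λ/L))` otherwise. -/
noncomputable def deltaCoord {n : ℕ} (l u : Fin n → EReal) (lam L : ℝ) (i : Fin n) : ℝ :=
  (if l i = 0 then min (u i) ((Real.sqrt (2 * lam / L) : ℝ) : EReal)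
   else if u i = 0 then min (-(l i)) ((Real.sqrt (2 * lam / L) : ℝ) : EReal)
   else min (min (-(l i)) (u i)) ((Real.sqrt (2 * lam / L) : ℝ) : EReal)).toReal

/- ### Auxiliary lemmas -/

lemma ereal_toReal_pos' {M : EReal} (h0 : 0 < M) (ht : M ≠ ⊤) : 0 < M.toReal := by
  have hb : M ≠ ⊥ := by intro h; simp [h] at h0
  have := EReal.coe_toReal ht hb
  rw [← EReal.coe_lt_coe_iff (x := 0) (y := M.toReal), this]
  simpa using h0

lemma ereal_toReal_le {M : EReal} {t : ℝ} (h : M ≤ (t : EReal)) (hb : M ≠ ⊥) :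
    M.toReal ≤ t := by
  have := EReal.toReal_le_toReal h hb (by simp)
  simpa using this

lemma ereal_ne_bot_of_nonneg {x : EReal} (h : 0 ≤ x) : x ≠ ⊥ := by
  intro he; rw [he] at h; simp at h

lemma ereal_neg_nonneg {x : EReal} (h : x ≤ 0) : (0 : EReal) ≤ -x := by
  simpa using EReal.neg_le_neg_iff.2 h

lemma ereal_neg_pos {x : EReal} (h : x < 0) : (0 : EReal) < -x := by
  simpa using EReal.neg_lt_neg_iff.2 h

lemma sum_update {n : ℕ} (F : Fin n → ℝ → ℝ) (z : Fin n → ℝ) (j : Fin n) (c : ℝ) :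
    ∑ i, F i (Function.update z j c i) = ∑ i, F i (z i) - F j (z j) + F j c := by
  have h : (fun i => F i (Function.update z j c i))
      = Function.update (fun i => F i (z i)) j (F j c) := by
    funext i
    by_cases h : i = j
    · subst h; simp
    · simp [Function.update_of_ne h]
  rw [h, Finset.sum_update_of_mem (Finset.mem_univ j), ← Finset.erase_eq,
    ← Finset.add_sum_erase _ _ (Finset.mem_univ j)]
  ring

/-- `Function.update`, packaged as an operation on `EuclideanSpace`. -/
noncomputable def updE {n : ℕ} (z : EuclideanSpace ℝ (Fin n)) (j : Fin n) (c : ℝ) :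
    EuclideanSpace ℝ (Fin n) :=
  WithLp.toLp 2 (Function.update z j c)

lemma norm0_update_zero {n : ℕ} (z : EuclideanSpace ℝ (Fin n)) (j : Fin n) (hz : z j ≠ 0) :
    norm0 (updE z j 0) = norm0 z - 1 := by
  unfold norm0 updE
  simp only [PiLp.toLp_apply]
  have h : (Finset.univ.filter fun i => Function.update z j (0:ℝ) i ≠ 0)
      = (Finset.univ.filter fun i => z i ≠ 0).erase j := by
    ext i
    by_cases h : i = j
    · subst h; simp
    · simp [Function.update_of_ne h, h]
  rw [h, Finset.card_erase_of_mem (by simp [hz])]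
  have : 0 < (Finset.univ.filter fun i => z i ≠ 0).card :=
    Finset.card_pos.2 ⟨j, by simp [hz]⟩
  rw [Nat.cast_sub (by omega)]
  push_cast
  ring

lemma norm0_update_ne {n : ℕ} (z : EuclideanSpace ℝ (Fin n)) (j : Fin n) (c : ℝ)
    (hz : z j ≠ 0) (hc : c ≠ 0) : norm0 (updE z j c) = norm0 z := by
  unfold norm0 updE
  congr 2
  ext i
  by_cases h : i = j
  · subst h; simp [hc, hz]
  · simp [Function.update_of_ne h]

lemma inner_sum' {n : ℕ} (g w : EuclideanSpace ℝ (Fin n)) : ⟪g, w⟫ = ∑ i, g i * w i := by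
  simp [PiLp.inner_apply, RCLike.inner_apply, mul_comm]

lemma normsq_sum {n : ℕ} (w : EuclideanSpace ℝ (Fin n)) : ‖w‖ ^ 2 = ∑ i, (w i) ^ 2 := by
  rw [← real_inner_self_eq_norm_sq, inner_sum' w w]
  simp [sq]

lemma sum_update_mul {n : ℕ} (g xk z : Fin n → ℝ) (j : Fin n) (c : ℝ) :
    ∑ i, g i * (Function.update z j c i - xk i)
      = (∑ i, g i * (z i - xk i)) - g j * (z j - xk j) + g j * (c - xk j) :=
  sum_update (fun i r => g i * (r - xk i)) z j c

lemma sum_update_sq {n : ℕ} (xk z : Fin n → ℝ) (j : Fin n) (c : ℝ) :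
    ∑ i, (Function.update z j c i - xk i) ^ 2
      = (∑ i, (z i - xk i) ^ 2) - (z j - xk j) ^ 2 + (c - xk j) ^ 2 :=
  sum_update (fun i r => (r - xk i) ^ 2) z j c

lemma obj_update {n : ℕ} (g xk z : EuclideanSpace ℝ (Fin n)) (j : Fin n) (c : ℝ) (L : ℝ) :
    ⟪g, updE z j c - xk⟫ + L / 2 * ‖updE z j c - xk‖ ^ 2
      = ⟪g, z - xk⟫ + L / 2 * ‖z - xk‖ ^ 2
        + (g j * (c - xk j) + L / 2 * (c - xk j) ^ 2)
        - (g j * (z j - xk j) + L / 2 * (z j - xk j) ^ 2) := by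
  rw [inner_sum', inner_sum', normsq_sum, normsq_sum]
  have e : ∀ (w : EuclideanSpace ℝ (Fin n)) i, (w - xk) i = w i - xk i := fun _ _ => rfl
  simp only [e]
  have e2 : ∀ i, updE z j c i = Function.update z j c i := fun _ => rfl
  simp only [e2]
  rw [sum_update_mul g xk z j c, sum_update_sq xk z j c]
  ring

lemma core_lemma (L lam a s t w : ℝ) (hL : 0 < L) (hlam : 0 < lam) (ht : 0 < t) (hw : t < w)
    (hA : lam + (a * t + L / 2 * (t - s) ^ 2) ≤ L / 2 * s ^ 2)
    (hB : ∀ c : ℝ, t < c → c ≤ w → a * t + L / 2 * (t - s) ^ 2 ≤ a * c + L / 2 * (c - s) ^ 2)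
    (hC : ∀ c : ℝ, 0 < c → c < t → a * t + L / 2 * (t - s) ^ 2 ≤ a * c + L / 2 * (c - s) ^ 2) :
    Real.sqrt (2 * lam / L) ≤ t := by
  obtain ⟨v, hvL⟩ : ∃ v : ℝ, a = L * (s - v) := ⟨s - a / L, by field_simp; ring⟩
  have hvpos : 0 < v := by nlinarith [mul_pos hL ht]
  have htv : t = v := by
    rcases lt_trichotomy t v with h | h | h
    · exfalso
      have h2 : t < min v w := lt_min h hw
      have hc := hB (min v w) h2 (min_le_right _ _)
      have h1 : min v w ≤ v := min_le_left _ _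
      nlinarith [mul_pos hL (mul_pos (sub_pos.2 h2)
        (show (0:ℝ) < v - (min v w + t) / 2 by linarith))]
    · exact h
    · exfalso
      have hc := hC ((v + t) / 2) (by linarith) (by linarith)
      nlinarith [mul_pos hL (mul_pos (show (0:ℝ) < t - (v + t) / 2 by linarith)
        (show (0:ℝ) < (v + t) / 2 + t - 2 * v by linarith))]
  have hkey : 2 * lam / L ≤ t ^ 2 := by
    rw [div_le_iff₀ hL]
    nlinarith [hA, hvL, htv]
  calc Real.sqrt (2 * lam / L) ≤ Real.sqrt (t ^ 2) := Real.sqrt_le_sqrt hkey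
    _ = t := by rw [Real.sqrt_sq ht.le]

theorem stmt_12 {n : ℕ} (l u : Fin n → EReal)
    (hl : ∀ i, l i ≤ 0) (hu : ∀ i, 0 ≤ u i)
    (B : Set (EuclideanSpace ℝ (Fin n)))
    (hB : B = {x | ∀ i, l i ≤ (x i : EReal) ∧ (x i : EReal) ≤ u i})
    (hproper : ∃ i, ¬(l i = 0 ∧ u i = 0))
    (f : EuclideanSpace ℝ (Fin n) → ℝ)
    (f' : EuclideanSpace ℝ (Fin n) → EuclideanSpace ℝ (Fin n))
    (hfconv : ConvexOn ℝ B f)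
    (hfdiff : ∀ x ∈ B, HasGradientAt f (f' x) x)
    (Lf : ℝ) (hLf : 0 < Lf)
    (hflip : ∀ x ∈ B, ∀ y ∈ B, ‖f' x - f' y‖ ≤ Lf * ‖x - y‖)
    (hfbdd : ∃ c : ℝ, ∀ x ∈ B, c ≤ f x)
    (lam : ℝ) (hlam : 0 < lam)
    (L : ℝ) (hL : Lf < L)
    (x : ℕ → EuclideanSpace ℝ (Fin n)) (hx0 : x 0 ∈ B)
    (hiter : ∀ k : ℕ, x (k + 1) ∈ B ∧ ∀ y ∈ B,
      f (x k) + ⟪f' (x k), x (k + 1) - x k⟫ + L / 2 * ‖x (k + 1) - x k‖ ^ 2 +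
          lam * norm0 (x (k + 1)) ≤
        f (x k) + ⟪f' (x k), y - x k⟫ + L / 2 * ‖y - x k‖ ^ 2 + lam * norm0 y)
    (δ : ℝ)
    (hδ : δ = sInf {r : ℝ | ∃ i, ¬(l i = 0 ∧ u i = 0) ∧ r = deltaCoord l u lam L i}) :
    0 < δ ∧ ∀ (k : ℕ) (j : Fin n), x (k + 1) j ≠ 0 → δ ≤ |x (k + 1) j| := by
  subst hB
  subst hδ
  have hL0 : 0 < L := hLf.trans hL
  set r := Real.sqrt (2 * lam / L) with hrdef
  have hrpos : 0 < r := Real.sqrt_pos.2 (by positivity)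
  have hr0e : (0 : EReal) < (r : EReal) := by exact_mod_cast hrpos
  have hrtop : ((r : EReal)) ≠ ⊤ := (EReal.coe_lt_top r).ne
  -- positivity of each deltaCoord
  have hdpos : ∀ i, ¬(l i = 0 ∧ u i = 0) → 0 < deltaCoord l u lam L i := by
    intro i hi
    unfold deltaCoord
    rw [← hrdef]
    split_ifs with h1 h2
    · have hu' : (0 : EReal) < u i := lt_of_le_of_ne (hu i) fun h => hi ⟨h1, h.symm⟩
      exact ereal_toReal_pos' (lt_min hu' hr0e)
        (((min_le_right _ _).trans_lt (EReal.coe_lt_top r)).ne)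
    · have hl' : l i < 0 := lt_of_le_of_ne (hl i) h1
      exact ereal_toReal_pos' (lt_min (ereal_neg_pos hl') hr0e)
        (((min_le_right _ _).trans_lt (EReal.coe_lt_top r)).ne)
    · have hu' : (0 : EReal) < u i := lt_of_le_of_ne (hu i) fun h => h2 h.symm
      have hl' : l i < 0 := lt_of_le_of_ne (hl i) h1
      exact ereal_toReal_pos' (lt_min (lt_min (ereal_neg_pos hl') hu') hr0e)
        (((min_le_right _ _).trans_lt (EReal.coe_lt_top r)).ne)
  set S := {r' : ℝ | ∃ i, ¬(l i = 0 ∧ u i = 0) ∧ r' = deltaCoord l u lam L i} with hSdef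
  have hSfin : S.Finite := by
    apply (Set.finite_range (deltaCoord l u lam L)).subset
    rintro _ ⟨i, _, rfl⟩
    exact ⟨i, rfl⟩
  obtain ⟨i0, hi0⟩ := hproper
  have hSne : S.Nonempty := ⟨_, i0, hi0, rfl⟩
  have hinf_mem := hSne.csInf_mem hSfin
  constructor
  · obtain ⟨i, hi, he⟩ := hinf_mem
    rw [he]
    exact hdpos i hi
  · intro k j htne
    obtain ⟨hmem, hopt⟩ := hiter k
    simp only [Set.mem_setOf_eq] at hmem
    have hlj : l j ≤ ((x (k + 1) j : ℝ) : EReal) := (hmem j).1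
    have huj : ((x (k + 1) j : ℝ) : EReal) ≤ u j := (hmem j).2
    have hgood : ¬(l j = 0 ∧ u j = 0) := by
      rintro ⟨h1, h2⟩
      rw [h1] at hlj; rw [h2] at huj
      have h3 : (0:ℝ) ≤ x (k + 1) j := EReal.coe_nonneg.mp hlj
      have h4 : x (k + 1) j ≤ (0:ℝ) := EReal.coe_nonpos.mp huj
      exact htne (le_antisymm h4 h3)
    have hdle : sInf S ≤ deltaCoord l u lam L j := csInf_le hSfin.bddBelow ⟨j, hgood, rfl⟩
    refine hdle.trans ?_
    -- abbreviations
    set a := f' (x k) j with hadef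
    set s := x k j with hsdef
    set t := x (k + 1) j with htdef
    -- the master one-coordinate comparison
    have hcomp : ∀ c : ℝ, l j ≤ (c : EReal) → (c : EReal) ≤ u j →
        ⟪f' (x k), x (k + 1) - x k⟫ + L / 2 * ‖x (k + 1) - x k‖ ^ 2 + lam * norm0 (x (k + 1))
          ≤ ⟪f' (x k), updE (x (k + 1)) j c - x k⟫
              + L / 2 * ‖updE (x (k + 1)) j c - x k‖ ^ 2
              + lam * norm0 (updE (x (k + 1)) j c) := by
      intro c h1 h2
      have hyB : updE (x (k + 1)) j c ∈
          {y : EuclideanSpace ℝ (Fin n) | ∀ i, l i ≤ (y i : EReal) ∧ (y i : EReal) ≤ u i} := by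
        intro i
        by_cases hij : i = j
        · subst hij
          have he : updE (x (k + 1)) i c i = c := by simp [updE]
          rw [he]
          exact ⟨h1, h2⟩
        · have he : updE (x (k + 1)) j c i = x (k + 1) i := by
            simp [updE, Function.update_of_ne hij]
          rw [he]
          exact hmem i
      have h := hopt (updE (x (k + 1)) j c) hyB
      linarith
    have fact0 : lam + (a * t + L / 2 * (t - s) ^ 2) ≤ L / 2 * s ^ 2 := by
      have h := hcomp 0 (by simpa using hl j) (by simpa using hu j)
      rw [obj_update (f' (x k)) (x k) (x (k + 1)) j 0 L,
        norm0_update_zero (x (k + 1)) j htne] at h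
      nlinarith [h]
    have fact1 : ∀ c : ℝ, l j ≤ (c : EReal) → (c : EReal) ≤ u j → c ≠ 0 →
        a * t + L / 2 * (t - s) ^ 2 ≤ a * c + L / 2 * (c - s) ^ 2 := by
      intro c h1 h2 hc
      have h := hcomp c h1 h2
      rw [obj_update (f' (x k)) (x k) (x (k + 1)) j c L,
        norm0_update_ne (x (k + 1)) j c htne hc] at h
      nlinarith [h]
    rcases htne.lt_or_gt with htneg | htpos
    · -- t < 0
      rw [abs_of_neg htneg]
      have hljne : l j ≠ 0 := by
        intro h0
        rw [h0] at hlj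
        have : (0:ℝ) ≤ t := EReal.coe_nonneg.mp hlj
        linarith
      have hstep : (min (-(l j)) (r : EReal)).toReal ≤ -t := by
        have hmne : (0 : EReal) ≤ min (-(l j)) (r : EReal) :=
          le_min (ereal_neg_nonneg (hl j)) hr0e.le
        rcases le_or_gt (-(l j)) (((-t : ℝ) : EReal)) with hle | hlt
        · exact ereal_toReal_le ((min_le_left _ _).trans hle) (ereal_ne_bot_of_nonneg hmne)
        · obtain ⟨w, htw, hwl⟩ : ∃ w : ℝ, -t < w ∧ l j ≤ ((-w : ℝ) : EReal) := by
            rcases eq_or_ne (l j) ⊥ with hT | hT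
            · exact ⟨-t + 1, by linarith, by simp [hT]⟩
            · have htne' : l j ≠ ⊤ := ((hl j).trans_lt (by simp : (0:EReal) < ⊤)).ne
              refine ⟨-(l j).toReal, ?_, ?_⟩
              · have h5 : ((-t : ℝ) : EReal) < ((-(l j).toReal : ℝ) : EReal) := by
                  rw [EReal.coe_neg, EReal.coe_neg, EReal.coe_toReal htne' hT]
                  exact hlt
                have := EReal.coe_lt_coe_iff.1 h5
                linarith
              · rw [neg_neg]
                exact (EReal.coe_toReal htne' hT).symm.le
          have hrt : r ≤ -t := by
            rw [hrdef]
            refine core_lemma L lam (-a) (-s) (-t) w hL0 hlam (by linarith) htw ?_ ?_ ?_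
            · nlinarith [fact0]
            · intro c hc1 hc2
              have hf := fact1 (-c) (le_trans hwl (by exact_mod_cast neg_le_neg hc2))
                (le_trans (by exact_mod_cast (by linarith : (-c : ℝ) ≤ 0)) (hu j))
                (neg_ne_zero.mpr (show (0:ℝ) < c by linarith).ne')
              nlinarith [hf]
            · intro c hc1 hc2
              have hf := fact1 (-c)
                (le_trans hlj (by exact_mod_cast (by linarith : t ≤ -c)))
                (le_trans (by exact_mod_cast (by linarith : (-c : ℝ) ≤ 0)) (hu j))
                (neg_ne_zero.mpr (show (0:ℝ) < c by linarith).ne')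
              nlinarith [hf]
          exact le_trans (ereal_toReal_le (min_le_right _ _) (ereal_ne_bot_of_nonneg hmne)) hrt
      unfold deltaCoord
      rw [← hrdef]
      split_ifs with h1 h2
      · exact absurd h1 hljne
      · exact hstep
      · refine le_trans ?_ hstep
        apply EReal.toReal_le_toReal (min_le_min (min_le_left _ _) le_rfl)
        · exact ereal_ne_bot_of_nonneg
            (le_min (le_min (ereal_neg_nonneg (hl j)) (hu j)) hr0e.le)
        · exact ((min_le_right _ _).trans_lt (EReal.coe_lt_top r)).ne
    · -- 0 < t
      rw [abs_of_pos htpos]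
      have hujne : u j ≠ 0 := by
        intro h0
        rw [h0] at huj
        have : t ≤ (0:ℝ) := EReal.coe_nonpos.mp huj
        linarith
      have hstep : (min (u j) (r : EReal)).toReal ≤ t := by
        have hmne : (0 : EReal) ≤ min (u j) (r : EReal) := le_min (hu j) hr0e.le
        rcases le_or_gt (u j) ((t : ℝ) : EReal) with hle | hlt
        · exact ereal_toReal_le ((min_le_left _ _).trans hle) (ereal_ne_bot_of_nonneg hmne)
        · obtain ⟨w, htw, hwu⟩ : ∃ w : ℝ, t < w ∧ ((w : ℝ) : EReal) ≤ u j := by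
            rcases eq_or_ne (u j) ⊤ with hT | hT
            · exact ⟨t + 1, by linarith, by simp [hT]⟩
            · have hbne : u j ≠ ⊥ := ereal_ne_bot_of_nonneg (hu j)
              refine ⟨(u j).toReal, ?_, by rw [EReal.coe_toReal hT hbne]⟩
              have h5 := hlt
              rw [← EReal.coe_toReal hT hbne] at h5
              exact EReal.coe_lt_coe_iff.1 h5
          have hrt : r ≤ t := by
            rw [hrdef]
            refine core_lemma L lam a s t w hL0 hlam htpos htw fact0 ?_ ?_
            · intro c hc1 hc2
              exact fact1 c (le_trans (hl j) (by exact_mod_cast (by linarith : (0:ℝ) ≤ c)))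
                (le_trans (by exact_mod_cast hc2) hwu) (by linarith)
            · intro c hc1 hc2
              exact fact1 c (le_trans (hl j) (by exact_mod_cast hc1.le))
                (le_trans (by exact_mod_cast hc2.le) huj) (ne_of_gt hc1)
          exact le_trans (ereal_toReal_le (min_le_right _ _) (ereal_ne_bot_of_nonneg hmne)) hrt
      unfold deltaCoord
      rw [← hrdef]
      split_ifs with h1
      · exact hstep
      · refine le_trans ?_ hstep
        apply EReal.toReal_le_toReal (min_le_min (min_le_right _ _) le_rfl)
        · exact ereal_ne_bot_of_nonneg
            (le_min (le_min (ereal_neg_nonneg (hl j)) (hu j)) hr0e.le)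
        · exact ((min_le_right _ _).trans_lt (EReal.coe_lt_top r)).ne
end

section
/- Let x^k ∈ B and let x^{k+1} ∈ Argmin_{x∈B} {f(x^k) + ⟨∇f(x^k), x − x^k⟩ + (L/2)‖x − x^k‖² + λ‖x‖₀}, where L > L_f. Then F(x^k) − F(x^{k+1}) ≥ ((L − L_f)/2)‖x^{k+1} − x^k‖², where F(x) = f(x) + λ‖x‖₀; in particular F(x^{k+1}) ≤ F(x^k). -/
open scoped RealInnerProductSpace Classical

/-- For one IHT step
`x^{k+1} ∈ Argmin_{x∈B} {f(x^k) + ⟨∇f(x^k), x − x^k⟩ + (L/2)‖x − x^k‖² + λ‖x‖₀}` with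
`L > L_f`, one has `F(x^k) − F(x^{k+1}) ≥ ((L − L_f)/2)‖x^{k+1} − x^k‖²`, where
`F = f + λ‖·‖₀`; in particular `F(x^{k+1}) ≤ F(x^k)`. -/
theorem stmt_13 {n : ℕ} (l u : Fin n → EReal)
    (hl : ∀ i, l i ≤ 0) (hu : ∀ i, 0 ≤ u i)
    (B : Set (EuclideanSpace ℝ (Fin n)))
    (hB : B = {x | ∀ i, l i ≤ (x i : EReal) ∧ (x i : EReal) ≤ u i})
    (f : EuclideanSpace ℝ (Fin n) → ℝ)
    (f' : EuclideanSpace ℝ (Fin n) → EuclideanSpace ℝ (Fin n))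
    (hfconv : ConvexOn ℝ B f)
    (hfdiff : ∀ x ∈ B, HasGradientAt f (f' x) x)
    (Lf : ℝ) (hLf : 0 < Lf)
    (hflip : ∀ x ∈ B, ∀ y ∈ B, ‖f' x - f' y‖ ≤ Lf * ‖x - y‖)
    (lam : ℝ) (hlam : 0 < lam)
    (L : ℝ) (hL : Lf < L)
    (F : EuclideanSpace ℝ (Fin n) → ℝ) (hF : ∀ x, F x = f x + lam * norm0 x)
    (xk xk1 : EuclideanSpace ℝ (Fin n)) (hxk : xk ∈ B) (hxk1 : xk1 ∈ B)
    (hmin : ∀ y ∈ B,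
      f xk + ⟪f' xk, xk1 - xk⟫ + L / 2 * ‖xk1 - xk‖ ^ 2 + lam * norm0 xk1 ≤
        f xk + ⟪f' xk, y - xk⟫ + L / 2 * ‖y - xk‖ ^ 2 + lam * norm0 y) :
    F xk - F xk1 ≥ (L - Lf) / 2 * ‖xk1 - xk‖ ^ 2 ∧ F xk1 ≤ F xk := by
  -- B is convex
  have hBconv : Convex ℝ B := by
    subst hB
    intro x hx y hy a b ha hb hab i
    have hx' := hx i
    have hy' := hy i
    have happ : (a • x + b • y) i = a * x i + b * y i := rfl
    have ha' : a = 1 - b := by linarith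
    subst ha'
    constructor
    · rw [happ]
      rcases le_total (x i) (y i) with h | h
      · exact le_trans hx'.1 (by rw [EReal.coe_le_coe_iff]; nlinarith [mul_nonneg hb (sub_nonneg.2 h)])
      · exact le_trans hy'.1 (by rw [EReal.coe_le_coe_iff]; nlinarith [mul_nonneg (by linarith : (0:ℝ) ≤ 1 - b) (sub_nonneg.2 h)])
    · rw [happ]
      rcases le_total (x i) (y i) with h | h
      · exact le_trans (by rw [EReal.coe_le_coe_iff]; nlinarith [mul_nonneg (by linarith : (0:ℝ) ≤ 1 - b) (sub_nonneg.2 h)]) hy'.2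
      · exact le_trans (by rw [EReal.coe_le_coe_iff]; nlinarith [mul_nonneg hb (sub_nonneg.2 h)]) hx'.2
  set d := xk1 - xk with hd
  set γ : ℝ → EuclideanSpace ℝ (Fin n) := fun t => xk + t • d with hγ
  have hγmem : ∀ t ∈ Set.Icc (0:ℝ) 1, γ t ∈ B := by
    intro t ht
    have hrep : γ t = (1 - t) • xk + t • xk1 := by
      simp only [hγ, hd]
      module
    rw [hrep]
    exact hBconv hxk hxk1 (by linarith [ht.2]) ht.1 (by ring)
  have hderiv : ∀ t ∈ Set.Icc (0:ℝ) 1,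
      HasDerivAt (fun s => f (γ s)) ⟪f' (γ t), d⟫ t := by
    intro t ht
    have h1 : HasDerivAt γ d t := by
      exact (((hasDerivAt_id t).smul_const d).const_add xk).congr_deriv (by simp)
    have h2 := (hfdiff (γ t) (hγmem t ht)).hasFDerivAt
    have h3 := h2.comp_hasDerivAt t h1
    exact h3
  -- continuity of the derivative integrand
  have hcont : ContinuousOn (fun t : ℝ => ⟪f' (γ t), d⟫) (Set.Icc 0 1) := by
    apply LipschitzOnWith.continuousOn (K := Real.toNNReal (Lf * ‖d‖ * ‖d‖))
    apply LipschitzOnWith.of_dist_le_mul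
    intro s hs t ht
    have h1 : dist ⟪f' (γ s), d⟫ ⟪f' (γ t), d⟫ = |⟪f' (γ s) - f' (γ t), d⟫| := by
      rw [Real.dist_eq, inner_sub_left]
    have h2 : |⟪f' (γ s) - f' (γ t), d⟫| ≤ ‖f' (γ s) - f' (γ t)‖ * ‖d‖ :=
      abs_real_inner_le_norm _ _
    have h3 : ‖f' (γ s) - f' (γ t)‖ ≤ Lf * ‖γ s - γ t‖ :=
      hflip _ (hγmem s hs) _ (hγmem t ht)
    have h4 : ‖γ s - γ t‖ = |s - t| * ‖d‖ := by
      have : γ s - γ t = (s - t) • d := by simp only [hγ]; module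
      rw [this, norm_smul, Real.norm_eq_abs]
    rw [h1]
    have hK : (Real.toNNReal (Lf * ‖d‖ * ‖d‖) : ℝ) = Lf * ‖d‖ * ‖d‖ := by
      rw [Real.coe_toNNReal]
      positivity
    rw [hK, Real.dist_eq]
    rw [h4] at h3
    nlinarith [mul_le_mul_of_nonneg_right h3 (norm_nonneg d), h2, abs_nonneg (s - t)]
  have hint1 : IntervalIntegrable (fun t : ℝ => ⟪f' (γ t), d⟫) MeasureTheory.volume 0 1 := by
    apply ContinuousOn.intervalIntegrable
    rwa [Set.uIcc_of_le (by norm_num : (0:ℝ) ≤ 1)]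
  have hint2 : IntervalIntegrable (fun t : ℝ => ⟪f' xk, d⟫ + Lf * ‖d‖ ^ 2 * t)
      MeasureTheory.volume 0 1 :=
    (continuous_const.add (continuous_const.mul continuous_id)).intervalIntegrable 0 1
  have hftc : ∫ t in (0:ℝ)..1, ⟪f' (γ t), d⟫ = f (γ 1) - f (γ 0) :=
    intervalIntegral.integral_eq_sub_of_hasDerivAt
      (f := fun s => f (γ s)) (f' := fun t => ⟪f' (γ t), d⟫)
      (fun t ht => hderiv t (by rwa [Set.uIcc_of_le (by norm_num : (0:ℝ) ≤ 1)] at ht)) hint1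
  have hγ1 : γ 1 = xk1 := by simp only [hγ, hd]; module
  have hγ0 : γ 0 = xk := by simp only [hγ]; module
  have hmono : ∫ t in (0:ℝ)..1, ⟪f' (γ t), d⟫ ≤
      ∫ t in (0:ℝ)..1, (⟪f' xk, d⟫ + Lf * ‖d‖ ^ 2 * t) := by
    apply intervalIntegral.integral_mono_on (by norm_num) hint1 hint2
    intro t ht
    have h1 : ⟪f' (γ t), d⟫ - ⟪f' xk, d⟫ = ⟪f' (γ t) - f' xk, d⟫ := (inner_sub_left _ _ _).symm
    have h2 : ⟪f' (γ t) - f' xk, d⟫ ≤ ‖f' (γ t) - f' xk‖ * ‖d‖ := real_inner_le_norm _ _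
    have h3 : ‖f' (γ t) - f' xk‖ ≤ Lf * ‖γ t - xk‖ := hflip _ (hγmem t ht) _ hxk
    have h4 : ‖γ t - xk‖ = t * ‖d‖ := by
      have : γ t - xk = t • d := by simp only [hγ]; module
      rw [this, norm_smul, Real.norm_eq_abs, abs_of_nonneg ht.1]
    have h5 : ‖d‖ ^ 2 = ‖d‖ * ‖d‖ := sq ‖d‖
    rw [h4] at h3
    nlinarith [mul_le_mul_of_nonneg_right h3 (norm_nonneg d), h2]
  have hval : ∫ t in (0:ℝ)..1, (⟪f' xk, d⟫ + Lf * ‖d‖ ^ 2 * t) =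
      ⟪f' xk, d⟫ + Lf * ‖d‖ ^ 2 / 2 := by
    have hlin : IntervalIntegrable (fun t : ℝ => Lf * ‖d‖ ^ 2 * t) MeasureTheory.volume 0 1 :=
      Continuous.intervalIntegrable (by fun_prop) 0 1
    rw [intervalIntegral.integral_add intervalIntegrable_const hlin,
      intervalIntegral.integral_const_mul]
    simp [integral_id]
    ring
  have hdesc : f xk1 ≤ f xk + ⟪f' xk, d⟫ + Lf / 2 * ‖d‖ ^ 2 := by
    rw [hγ1, hγ0] at hftc
    linarith [hmono, hval, hftc]
  have hm := hmin xk hxk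
  simp only [sub_self, inner_zero_right, norm_zero] at hm
  have hm' : ⟪f' xk, d⟫ + L / 2 * ‖d‖ ^ 2 + lam * norm0 xk1 ≤ lam * norm0 xk := by
    have h0 : (0:ℝ) ^ 2 = 0 := by norm_num
    rw [h0] at hm
    linarith
  have hN : (0:ℝ) ≤ ‖d‖ ^ 2 := sq_nonneg _
  constructor
  · rw [hF, hF]
    linarith
  · rw [hF, hF]
    nlinarith
end
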